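/- arXiv:0809.4713 — 10 statements merged into one kernel-verified Lean document; each statement's English description precedes it below -/
import Mathlib

section
/- Let g be a real Lie algebra, D a derivation with D³ = −D, and define the linear map τ_D by τ_D = Id on Ker D and τ_D = −Id on {X | D²X = −X}. Then τ_D is an involutive automorphism of the Lie algebra g. -/
/-- If `D` is a derivation of a finite-dimensional real Lie algebra with
`D³ = -D`, then the map `τ_D` (identity on `Ker D`, minus identity on
`{X | D²X = -X}`) is an involutive automorphism of the Lie algebra. -/
theorem stmt2 {g : Type*} [LieRing g] [LieAlgebra ℝ g] [FiniteDimensional ℝ g]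
    (D : g →ₗ[ℝ] g)
    (hder : ∀ X Y : g, D ⁅X, Y⁆ = ⁅D X, Y⁆ + ⁅X, D Y⁆)
    (hD3 : ∀ X : g, D (D (D X)) = -D X)
    (τ : g →ₗ[ℝ] g)
    (hτp : ∀ X : g, D X = 0 → τ X = X)
    (hτm : ∀ X : g, D (D X) = -X → τ X = -X) :
    (∀ X : g, τ (τ X) = X) ∧ Function.Bijective τ ∧
      ∀ X Y : g, τ ⁅X, Y⁆ = ⁅τ X, τ Y⁆ := by
  have hD4 : ∀ X, D (D (D (D X))) = -(D (D X)) := by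
    intro X
    have := hD3 (D X)
    simpa using this
  -- τ = Id + 2 D²
  have hτ : ∀ X : g, τ X = X + (2:ℝ) • D (D X) := by
    intro X
    have h1 : τ (X + D (D X)) = X + D (D X) := by
      apply hτp
      rw [map_add, hD3]
      abel
    have h2 : τ (D (D X)) = -(D (D X)) := hτm _ (hD4 X)
    have h3 : τ X = τ (X + D (D X)) - τ (D (D X)) := by
      rw [← map_sub]
      congr 1
      abel
    rw [h3, h1, h2]
    module
  -- second-order derivation formula on the (-1)-eigenspace of D²
  have e2 : ∀ A B : g, D (D A) = -A → D (D B) = -B →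
      D (D ⁅A, B⁆) = (2:ℝ) • ⁅D A, D B⁆ - (2:ℝ) • ⁅A, B⁆ := by
    intro A B hA hB
    rw [hder, map_add, hder, hder, hA, hB]
    simp only [lie_neg, neg_lie]
    module
  -- key: bracket invariance ⁅D A, D B⁆ = ⁅A, B⁆ on the (-1)-eigenspace
  have key : ∀ A B : g, D (D A) = -A → D (D B) = -B → ⁅D A, D B⁆ = ⁅A, B⁆ := by
    intro A B hA hB
    have hA' : D (D (D A)) = -(D A) := hD3 A
    have hB' : D (D (D B)) = -(D B) := hD3 B
    have h1 := e2 A B hA hB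
    have h2 := e2 (D A) (D B) hA' hB'
    rw [hA, hB] at h2
    simp only [lie_neg, neg_lie, neg_neg] at h2
    -- D⁴⁅A,B⁆ = -D²⁅A,B⁆
    have h4 : D (D (D (D ⁅A, B⁆))) = -(D (D ⁅A, B⁆)) := hD4 _
    rw [h1] at h4
    rw [map_sub, map_smul, map_smul, map_sub, map_smul, map_smul, h1, h2] at h4
    -- now h4 : 2•(2•u - 2•v) - 2•(2•v - 2•u) = -(2•v - 2•u)  with u=⁅A,B⁆, v=⁅DA,DB⁆
    have h6 : (6:ℝ) • ⁅D A, D B⁆ = (6:ℝ) • ⁅A, B⁆ := by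
      have := h4
      linear_combination (norm := module) -this
    have := congrArg (fun z => (6:ℝ)⁻¹ • z) h6
    simpa [smul_smul] using this
  have hinv : ∀ X : g, τ (τ X) = X := by
    intro X
    rw [hτ, hτ]
    simp only [map_add, map_smul, hD4]
    module
  refine ⟨hinv, ⟨?_, ?_⟩, ?_⟩
  · intro a b hab
    have := congrArg τ hab
    rwa [hinv, hinv] at this
  · intro y
    exact ⟨τ y, hinv y⟩
  · intro X Y
    have hk : ⁅D (D X), D (D Y)⁆ = ⁅D X, D Y⁆ := key (D X) (D Y) (hD3 X) (hD3 Y)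
    rw [hτ, hτ, hτ, hder, map_add, hder, hder]
    simp only [add_lie, lie_add, smul_lie, lie_smul, smul_smul]
    rw [← hk]
    module
end

section
/- Let (g, ⟨·,·⟩) be a vector space with a symmetric bilinear form, θ an involutive isometry of g, and D an antisymmetric endomorphism with D³ = −D and Dθ = −θD. Let g₊ and g₋ be the ±1-eigenspaces of θ, and g⁺ = Ker D, g⁻ = {X | D²X = −X}. Then the restriction of D to g₊ ∩ g⁻ is an isometry onto g₋ ∩ g⁻. -/
/-- Given a symmetric bilinear form, an involutive isometry `θ` and an
antisymmetric `D` with `D³ = -D`, `Dθ = -θD`, the restriction of `D` to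
`g₊ ∩ g⁻` is an isometry onto `g₋ ∩ g⁻`. -/
theorem stmt3 {g : Type*} [AddCommGroup g] [Module ℝ g] [FiniteDimensional ℝ g]
    (B : g →ₗ[ℝ] g →ₗ[ℝ] ℝ) (hsym : ∀ x y : g, B x y = B y x)
    (θ : g →ₗ[ℝ] g) (hθ2 : ∀ x : g, θ (θ x) = x)
    (hθiso : ∀ x y : g, B (θ x) (θ y) = B x y)
    (D : g →ₗ[ℝ] g) (hanti : ∀ x y : g, B (D x) y + B x (D y) = 0)
    (hD3 : ∀ x : g, D (D (D x)) = -D x)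
    (hDθ : ∀ x : g, D (θ x) = -θ (D x)) :
    (∀ x ∈ {x : g | θ x = x ∧ D (D x) = -x}, ∀ y ∈ {x : g | θ x = x ∧ D (D x) = -x},
        B (D x) (D y) = B x y) ∧
      Set.BijOn D {x : g | θ x = x ∧ D (D x) = -x} {x : g | θ x = -x ∧ D (D x) = -x} := by
  have key : ∀ x y : g, B (D x) (D y) = - B (D (D x)) y := by
    intro x y
    have h1 := hanti (D x) y
    have : B (D (D x)) y + B (D x) (D y) = 0 := hanti (D x) y
    linarith
  constructor
  · rintro x ⟨-, hx2⟩ y ⟨-, -⟩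
    rw [key, hx2]; simp
  · refine ⟨?_, ?_, ?_⟩
    · rintro x ⟨hx1, hx2⟩
      constructor
      · have := hDθ x
        rw [hx1] at this
        rw [← neg_eq_iff_eq_neg] at this
        simpa using this.symm
      · rw [← map_neg, ← hx2]
    · rintro x ⟨-, hx2⟩ y ⟨-, hy2⟩ hxy
      have : D (D x) = D (D y) := by rw [hxy]
      rw [hx2, hy2] at this
      exact neg_injective this
    · rintro y ⟨hy1, hy2⟩
      refine ⟨-D y, ⟨?_, ?_⟩, ?_⟩
      · have := hDθ y
        rw [hy1, map_neg] at this
        have : θ (D y) = D y := by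
          have h := this
          rw [neg_eq_iff_eq_neg] at h
          exact neg_injective (by simpa using h.symm)
        simp [this]
      · simp only [map_neg, hD3 y, neg_neg]
      · simp [hy2]
end

section
/- Let (g, ⟨·,·⟩, (D, θ)) be a weak extrinsic symmetric triple. Then the metric radical R = {X ∈ g | ⟨X, Y⟩ = 0 for all Y ∈ g} is contained in the center of g. -/
/-- A *weak extrinsic symmetric triple*, given by a Lie bracket `br`, an invariant
symmetric bilinear form `B`, an isometric involutive automorphism `θ` and an
antisymmetric derivation `D` with `D³ = -D`, `Dθ = -θD`, such that
`[g₊⁻, g₊⁻] = g₊⁺` and `B` is nondegenerate on `g₊ ⊕ g₋⁻`. Here `g₊/g₋` are the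
`±1`-eigenspaces of `θ` and `g⁺ = Ker D`, `g⁻ = {x | D²x = -x}`. -/
def IsWeakEST {g : Type*} [AddCommGroup g] [Module ℝ g]
    (br : g → g → g) (B : g → g → ℝ) (θ D : g → g) : Prop :=
  -- `br` is a Lie bracket
  (∀ x y z : g, br (x + y) z = br x z + br y z) ∧
  (∀ (c : ℝ) (x y : g), br (c • x) y = c • br x y) ∧
  (∀ x : g, br x x = 0) ∧
  (∀ x y z : g, br (br x y) z + br (br y z) x + br (br z x) y = 0) ∧
  -- `B` is a symmetric invariant bilinear form
  (∀ x y z : g, B (x + y) z = B x z + B y z) ∧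
  (∀ (c : ℝ) (x y : g), B (c • x) y = c * B x y) ∧
  (∀ x y : g, B x y = B y x) ∧
  (∀ x y z : g, B (br x y) z + B y (br x z) = 0) ∧
  -- `θ` is an isometric involutive automorphism
  IsLinearMap ℝ θ ∧
  (∀ x : g, θ (θ x) = x) ∧
  (∀ x y : g, θ (br x y) = br (θ x) (θ y)) ∧
  (∀ x y : g, B (θ x) (θ y) = B x y) ∧
  -- `D` is an antisymmetric derivation with `D³ = -D` and `Dθ = -θD`
  IsLinearMap ℝ D ∧
  (∀ x y : g, D (br x y) = br (D x) y + br x (D y)) ∧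
  (∀ x y : g, B (D x) y + B x (D y) = 0) ∧
  (∀ x : g, D (D (D x)) = -D x) ∧
  (∀ x : g, D (θ x) = -θ (D x)) ∧
  -- `[g₊⁻, g₊⁻] = g₊⁺`
  ((Submodule.span ℝ {z : g | ∃ x y : g,
      θ x = x ∧ D (D x) = -x ∧ θ y = y ∧ D (D y) = -y ∧ z = br x y} : Set g)
    = {w : g | θ w = w ∧ D w = 0}) ∧
  -- `B` is nondegenerate on `g₊ ⊕ g₋⁻`
  (∀ x y : g, θ x = x → θ y = -y → D (D y) = -y →
    (∀ u v : g, θ u = u → θ v = -v → D (D v) = -v → B (x + y) (u + v) = 0) →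
    x + y = 0)

/-- In a weak extrinsic symmetric triple, the metric radical is contained
in the centre of `g`. -/
theorem stmt6 {g : Type*} [LieRing g] [LieAlgebra ℝ g] (B : g → g → ℝ) (θ D : g → g)
    (h : IsWeakEST (fun x y : g => ⁅x, y⁆) B θ D) :
    ∀ x : g, (∀ y : g, B x y = 0) → ∀ z : g, ⁅x, z⁆ = 0 := by

  obtain ⟨hba, hbs, hbx, hjac, hBa, hBs, hBsym, hinv, hθl, hθθ, hθbr, hθB, hDl,
    hDder, hDanti, hD3, hDθ, hspan, hnd⟩ := h
  -- basic helpers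
  have half : ∀ a : g, a + a = 0 → a = 0 := by
    intro a ha
    have h2 : (2:ℝ) • a = 0 := by rw [two_smul]; exact ha
    calc a = (2⁻¹:ℝ) • ((2:ℝ) • a) := by rw [smul_smul]; norm_num
    _ = 0 := by rw [h2, smul_zero]
  have hBneg : ∀ u y : g, B (-u) y = -B u y := by
    intro u y
    have := hBs (-1) u y
    simpa using this
  have hθD : ∀ u : g, θ (D u) = -D (θ u) := by
    intro u; rw [hDθ u, neg_neg]
  -- radical is stable etc.
  have hradθ : ∀ w : g, (∀ y, B w y = 0) → ∀ y, B (θ w) y = 0 := by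
    intro w hw y
    calc B (θ w) y = B (θ w) (θ (θ y)) := by rw [hθθ]
    _ = B w (θ y) := hθB w (θ y)
    _ = 0 := hw _
  have hradD : ∀ w : g, (∀ y, B w y = 0) → ∀ y, B (D w) y = 0 := by
    intro w hw y
    have := hDanti w y
    have := hw (D y)
    linarith
  have hradneg : ∀ w : g, (∀ y, B w y = 0) → ∀ y, B (-w) y = 0 := by
    intro w hw y; rw [hBneg, hw, neg_zero]
  have hradadd : ∀ w w' : g, (∀ y, B w y = 0) → (∀ y, B w' y = 0) →
      ∀ y, B (w + w') y = 0 := by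
    intro w w' hw hw' y; rw [hBa, hw, hw', add_zero]
  -- key: radical elements lie in g₋⁺
  have hkey : ∀ w : g, (∀ y, B w y = 0) → θ w = -w ∧ D w = 0 := by
    intro w hw
    set a := w + θ w with hadef
    set m := -(D (D (w - θ w))) with hmdef
    have hwsub : ∀ y, B (w - θ w) y = 0 := by
      intro y
      rw [sub_eq_add_neg]
      exact hradadd _ _ hw (hradneg _ (hradθ _ hw)) y
    have ha : ∀ y, B a y = 0 := hradadd _ _ hw (hradθ _ hw)
    have hm : ∀ y, B m y = 0 := hradneg _ (hradD _ (hradD _ hwsub))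
    have hθa : θ a = a := by
      rw [hadef, hθl.map_add, hθθ, add_comm]
    have hθsub : θ (w - θ w) = -(w - θ w) := by
      rw [hθl.map_sub, hθθ, neg_sub]
    have hθm : θ m = -m := by
      simp only [hmdef, hθl.map_neg, hθD, hDl.map_neg, hθsub, neg_neg]
    have hD2m : D (D m) = -m := by
      simp only [hmdef, hDl.map_neg, hD3, neg_neg]
    have ham : a + m = 0 := by
      refine hnd a m hθa hθm hD2m ?_
      intro u v _ _ _
      exact hradadd _ _ ha hm (u + v)
    have ham' : a - m = 0 := by
      have := congrArg θ ham
      rw [hθl.map_add, hθa, hθm, hθl.map_zero] at this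
      rw [sub_eq_add_neg]; exact this
    have ha0 : a = 0 := by
      apply half
      have : (a + m) + (a - m) = a + a := by abel
      rw [← this, ham, ham', add_zero]
    have hm0 : m = 0 := by
      have := ham; rw [ha0, zero_add] at this; exact this
    have hθw : θ w = -w := by
      have : w + θ w = 0 := by rw [← hadef]; exact ha0
      exact eq_neg_of_add_eq_zero_right this
    have hD2 : D (D w) = 0 := by
      have h1 : D (D (w - θ w)) = 0 := by
        have := hm0
        rw [hmdef, neg_eq_zero] at this
        exact this
      rw [hθw, sub_neg_eq_add, hDl.map_add, hDl.map_add] at h1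
      exact half _ h1
    have hDw : D w = 0 := by
      have := hD3 w
      rw [hD2, hDl.map_zero] at this
      have := this.symm
      rwa [neg_eq_zero] at this
    exact ⟨hθw, hDw⟩
  intro x hx
  obtain ⟨hθx, hDx⟩ := hkey x hx
  -- brackets with x stay in the radical
  have hbrad : ∀ z y : g, B ⁅x, z⁆ y = 0 := by
    intro z y
    have h1 := hinv z x y
    have h2 : B x ⁅z, y⁆ = 0 := hx _
    have h3 : (⁅x, z⁆ : g) = -⁅z, x⁆ := (lie_skew x z).symm
    rw [h3, hBneg]
    simp only at h1
    linarith
  have hbr : ∀ z : g, θ ⁅x, z⁆ = -⁅x, z⁆ ∧ D ⁅x, z⁆ = 0 := fun z => hkey _ (hbrad z)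
  -- step 1 : z in g₋
  have h1 : ∀ z : g, θ z = -z → ⁅x, z⁆ = 0 := by
    intro z hz
    have e1 : θ ⁅x, z⁆ = ⁅x, z⁆ := by
      have := hθbr x z
      simp only at this
      rw [this, hθx, hz, neg_lie, lie_neg, neg_neg]
    have e2 := (hbr z).1
    apply half
    nth_rewrite 1 [← e1]
    rw [e2, neg_add_cancel]
  -- step 2 : z in image of D
  have h2 : ∀ z : g, ⁅x, D z⁆ = 0 := by
    intro z
    have := hDder x z
    simp only at this
    rw [hDx, zero_lie, zero_add] at this
    rw [← this]
    exact (hbr z).2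
  -- step 3 : z in g⁻
  have h3 : ∀ z : g, D (D z) = -z → ⁅x, z⁆ = 0 := by
    intro z hz
    have := h2 (-(D z))
    rwa [hDl.map_neg, hz, neg_neg] at this
  -- step 4 : z in g₊⁺, by the span hypothesis
  have hspanlie : ∀ u : g, u ∈ Submodule.span ℝ {z : g | ∃ a b : g,
      θ a = a ∧ D (D a) = -a ∧ θ b = b ∧ D (D b) = -b ∧ z = ⁅a, b⁆} → ⁅x, u⁆ = 0 := by
    intro u hu
    induction hu using Submodule.span_induction with
    | mem w hwmem =>
      obtain ⟨a, b, _, ha2, _, hb2, rfl⟩ := hwmem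
      have hxa : ⁅x, a⁆ = 0 := h3 a ha2
      have hxb : ⁅x, b⁆ = 0 := h3 b hb2
      rw [leibniz_lie, hxa, hxb, zero_lie, lie_zero, add_zero]
    | zero => exact lie_zero x
    | add u v _ _ hu hv => rw [lie_add, hu, hv, add_zero]
    | smul c u _ hu => rw [lie_smul, hu, smul_zero]
  have h4 : ∀ z : g, θ z = z → D z = 0 → ⁅x, z⁆ = 0 := by
    intro z hz1 hz2
    apply hspanlie
    have : z ∈ ({w : g | θ w = w ∧ D w = 0} : Set g) := ⟨hz1, hz2⟩
    rw [← hspan] at this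
    exact this
  -- combine
  intro z
  set zp := (2⁻¹:ℝ) • (z + θ z) with hzpdef
  set zm := (2⁻¹:ℝ) • (z - θ z) with hzmdef
  have hzdec : z = zp + zm := by
    rw [hzpdef, hzmdef]; module
  have hθzp : θ zp = zp := by
    rw [hzpdef, hθl.map_smul, hθl.map_add, hθθ, add_comm]
  have hθzm : θ zm = -zm := by
    rw [hzmdef, hθl.map_smul, hθl.map_sub, hθθ, ← smul_neg, neg_sub]
  have hxzm : ⁅x, zm⁆ = 0 := h1 zm hθzm
  -- decompose zp
  set p := zp + D (D zp) with hpdef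
  set q := -(D (D zp)) with hqdef
  have hzpdec : zp = p + q := by rw [hpdef, hqdef]; abel
  have hθp : θ p = p := by
    simp only [hpdef, hθl.map_add, hθzp, hθD, hDl.map_neg, neg_neg]
  have hDp : D p = 0 := by
    rw [hpdef, hDl.map_add, hD3, add_neg_cancel]
  have hD2q : D (D q) = -q := by
    simp only [hqdef, hDl.map_neg, hD3, neg_neg]
  have hxp : ⁅x, p⁆ = 0 := h4 p hθp hDp
  have hxq : ⁅x, q⁆ = 0 := h3 q hD2q
  rw [hzdec, lie_add, hxzm, add_zero, hzpdec, lie_add, hxp, hxq, add_zero]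
end

section
/- Let (g, ⟨·,·⟩, (D,θ)) be a weak extrinsic symmetric triple with metric radical R. Then R is an ideal of g; moreover R ⊆ g₋⁺ = g₋ ∩ Ker D, and the quotient g/R carries an induced nondegenerate invariant inner product, an induced isometric involution, and an induced antisymmetric derivation D̄ with D̄³ = −D̄, making g/R an extrinsic symmetric triple. -/
open Function Set

section Radical

variable {g : Type*} {B : g → g → ℝ}

theorem radical_apply_of_isometry {θ : g → g} (hθθ : ∀ x, θ (θ x) = x)
    (hθB : ∀ x y, B (θ x) (θ y) = B x y) {x : g} (hx : ∀ y, B x y = 0) (y : g) :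
    B (θ x) y = 0 := by
  rw [← hθθ y, hθB]
  exact hx _

theorem radical_apply_of_antisymm {D : g → g} (hDB : ∀ x y, B (D x) y + B x (D y) = 0)
    {x : g} (hx : ∀ y, B x y = 0) (y : g) : B (D x) y = 0 := by
  linarith [hDB x y, hx (D y)]

theorem radical_subset_minus_inter_ker [AddCommGroup g] [Module ℝ g] {θ D : g → g}
    (hBa : ∀ x y z, B (x + y) z = B x z + B y z) (hθlin : IsLinearMap ℝ θ)
    (hθθ : ∀ x, θ (θ x) = x) (hθB : ∀ x y, B (θ x) (θ y) = B x y) (hDlin : IsLinearMap ℝ D)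
    (hDB : ∀ x y, B (D x) y + B x (D y) = 0) (hDθ : ∀ x, D (θ x) = -θ (D x))
    (hplus : ∀ x, θ x = x → (∀ y, B x y = 0) → x = 0) {x : g} (hx : ∀ y, B x y = 0) :
    θ x = -x ∧ D x = 0 := by
  have hθx : θ x = -x := by
    have hfix : θ (x + θ x) = x + θ x := by rw [hθlin.map_add, hθθ, add_comm]
    have hrad : ∀ y, B (x + θ x) y = 0 := fun y => by
      rw [hBa, hx, radical_apply_of_isometry hθθ hθB hx, add_zero]
    exact eq_neg_of_add_eq_zero_right (hplus _ hfix hrad)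
  refine ⟨hθx, hplus _ ?_ (radical_apply_of_antisymm hDB hx)⟩
  rw [← neg_neg (θ (D x)), ← hDθ, hθx, hDlin.map_neg, neg_neg]

end Radical

theorem radical_lie_of_invariant {L : Type*} [LieRing L] {B : L → L → ℝ}
    (hBinv : ∀ x y z : L, B ⁅x, y⁆ z + B y ⁅x, z⁆ = 0) {x : L} (hx : ∀ y, B x y = 0) (z y : L) :
    B ⁅z, x⁆ y = 0 := by
  linarith [hBinv z x y, hx ⁅z, y⁆]

theorem lie_lie_add_lie_lie_add_lie_lie {L : Type*} [LieRing L] (x y z : L) :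
    ⁅⁅x, y⁆, z⁆ + ⁅⁅y, z⁆, x⁆ + ⁅⁅z, x⁆, y⁆ = 0 := by
  rw [← lie_skew ⁅x, y⁆, ← lie_skew ⁅y, z⁆, ← lie_skew ⁅z, x⁆, ← neg_eq_zero, ← lie_jacobi x y z]
  abel

theorem IsWeakEST.eq_zero_of_fixed_of_orthogonal {g : Type*} [AddCommGroup g] [Module ℝ g]
    {br : g → g → g} {B : g → g → ℝ} {θ D : g → g} (h : IsWeakEST br B θ D) {x : g} (hθx : θ x = x)
    (hx : ∀ y, B x y = 0) : x = 0 := by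
  obtain ⟨-, -, -, -, -, -, -, -, hθlin, -, -, -, hDlin, -, -, -, -, -, hnd⟩ := h
  simpa using hnd x 0 hθx (by simp [hθlin.map_zero]) (by simp [hDlin.map_zero])
    fun u v _ _ _ => by simpa using hx (u + v)

theorem IsWeakEST.radical_subset {g : Type*} [AddCommGroup g] [Module ℝ g] {br : g → g → g}
    {B : g → g → ℝ} {θ D : g → g} (h : IsWeakEST br B θ D) {x : g} (hx : ∀ y, B x y = 0) :
    θ x = -x ∧ D x = 0 := by
  have ⟨_, _, _, _, hBa, _, _, _, hθlin, hθθ, _, hθB, hDlin, _, hDB, _, hDθ, _⟩ := h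
  exact radical_subset_minus_inter_ker hBa hθlin hθθ hθB hDlin hDB hDθ
    (fun _ => h.eq_zero_of_fixed_of_orthogonal) hx

section Eigenspaces

variable {g : Type*} [AddCommGroup g] [Module ℝ g] {θ D : g → g}

theorem sq_commute_of_anticommute (hDlin : IsLinearMap ℝ D) (hDθ : ∀ x, D (θ x) = -θ (D x))
    (x : g) : θ (D (D x)) = D (D (θ x)) := by
  rw [hDθ, hDlin.map_neg, hDθ, neg_neg]

theorem sq_neg_sq_of_cube_eq_neg (hDlin : IsLinearMap ℝ D) (hD3 : ∀ x, D (D (D x)) = -D x) (x : g) :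
    D (D (-D (D x))) = -(-D (D x)) := by
  rw [hDlin.map_neg, hDlin.map_neg, hD3]

theorem exists_eigen_decomposition (hθlin : IsLinearMap ℝ θ) (hθθ : ∀ x, θ (θ x) = x)
    (hDlin : IsLinearMap ℝ D) (hD3 : ∀ x, D (D (D x)) = -D x) (hDθ : ∀ x, D (θ x) = -θ (D x))
    (z : g) : ∃ x y w, θ x = x ∧ (θ y = -y ∧ D (D y) = -y) ∧ (θ w = -w ∧ D w = 0) ∧
      x + y + w = z := by
  set m := (1 / 2 : ℝ) • (z - θ z)
  have hθm : θ m = -m := by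
    rw [hθlin.map_smul, hθlin.map_sub, hθθ]
    module
  have hθDDm : θ (D (D m)) = -D (D m) := by
    rw [sq_commute_of_anticommute hDlin hDθ, hθm, hDlin.map_neg, hDlin.map_neg]
  refine ⟨(1 / 2 : ℝ) • (z + θ z), -D (D m), m + D (D m), ?_,
    ⟨?_, sq_neg_sq_of_cube_eq_neg hDlin hD3 m⟩, ⟨?_, ?_⟩, ?_⟩
  · rw [hθlin.map_smul, hθlin.map_add, hθθ, add_comm]
  · rw [hθlin.map_neg, hθDDm]
  · rw [hθlin.map_add, hθm, hθDDm, neg_add]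
  · rw [hDlin.map_add, hD3, add_neg_cancel]
  · module

variable {B : g → g → ℝ}

theorem orthogonal_of_fixed_of_anti (hBs : ∀ (c : ℝ) x y, B (c • x) y = c * B x y)
    (hBsym : ∀ x y, B x y = B y x) (hθB : ∀ x y, B (θ x) (θ y) = B x y) {x w : g}
    (hx : θ x = x) (hw : θ w = -w) : B x w = 0 := by
  have hneg : B x (-w) = -B x w := by
    rw [hBsym, ← neg_one_smul ℝ w, hBs, hBsym]
    ring
  have := hθB x w
  rw [hx, hw, hneg] at this
  linarith

theorem orthogonal_of_sq_eq_neg_of_ker (hBs : ∀ (c : ℝ) x y, B (c • x) y = c * B x y)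
    (hBsym : ∀ x y, B x y = B y x) (hDB : ∀ x y, B (D x) y + B x (D y) = 0) {y w : g}
    (hy : D (D y) = -y) (hw : D w = 0) : B y w = 0 := by
  have := hDB (D y) w
  rw [hy, hw, hBsym _ 0, ← neg_one_smul ℝ y, ← zero_smul ℝ (0 : g), hBs, hBs] at this
  linarith

end Eigenspaces

section Lift

variable {g q : Type*} [AddCommGroup g] [Module ℝ g] [AddCommGroup q] [Module ℝ q]
  {F : Type*} [FunLike F g q] [LinearMapClass F ℝ g q] (π : F) {θ D : g → g} {θ' D' : q → q}

theorem exists_lift_fixed (hπ : Surjective π) (hθlin : IsLinearMap ℝ θ) (hθθ : ∀ x, θ (θ x) = x)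
    (hθ' : ∀ x, θ' (π x) = π (θ x)) {u : q} (hu : θ' u = u) : ∃ a, π a = u ∧ θ a = a := by
  obtain ⟨c, rfl⟩ := hπ u
  refine ⟨(1 / 2 : ℝ) • (c + θ c), ?_, ?_⟩
  · rw [map_smul, map_add, ← hθ', hu]
    module
  · rw [hθlin.map_smul, hθlin.map_add, hθθ, add_comm]

theorem exists_lift_anti (hπ : Surjective π) (hθlin : IsLinearMap ℝ θ) (hθθ : ∀ x, θ (θ x) = x)
    (hθ' : ∀ x, θ' (π x) = π (θ x)) {u : q} (hu : θ' u = -u) : ∃ a, π a = u ∧ θ a = -a := by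
  obtain ⟨c, rfl⟩ := hπ u
  refine ⟨(1 / 2 : ℝ) • (c - θ c), ?_, ?_⟩
  · rw [map_smul, map_sub, ← hθ', hu]
    module
  · rw [hθlin.map_smul, hθlin.map_sub, hθθ]
    module

theorem map_neg_sq_of_sq_eq_neg (hD' : ∀ x, D' (π x) = π (D x)) {a : g} {u : q} (ha : π a = u)
    (hu : D' (D' u) = -u) : π (-D (D a)) = u := by
  rw [map_neg, ← hD', ← hD', ha, hu, neg_neg]

theorem exists_lift_fixed_of_sq_eq_neg (hπ : Surjective π) (hθlin : IsLinearMap ℝ θ)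
    (hθθ : ∀ x, θ (θ x) = x) (hDlin : IsLinearMap ℝ D) (hD3 : ∀ x, D (D (D x)) = -D x)
    (hDθ : ∀ x, D (θ x) = -θ (D x)) (hθ' : ∀ x, θ' (π x) = π (θ x))
    (hD' : ∀ x, D' (π x) = π (D x)) {u : q} (hu : θ' u = u) (hDu : D' (D' u) = -u) :
    ∃ a, π a = u ∧ θ a = a ∧ D (D a) = -a := by
  obtain ⟨a, rfl, hθa⟩ := exists_lift_fixed π hπ hθlin hθθ hθ' hu
  refine ⟨-D (D a), map_neg_sq_of_sq_eq_neg π hD' rfl hDu, ?_, sq_neg_sq_of_cube_eq_neg hDlin hD3 a⟩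
  rw [hθlin.map_neg, sq_commute_of_anticommute hDlin hDθ, hθa]

theorem exists_lift_anti_of_sq_eq_neg (hπ : Surjective π) (hθlin : IsLinearMap ℝ θ)
    (hθθ : ∀ x, θ (θ x) = x) (hDlin : IsLinearMap ℝ D) (hD3 : ∀ x, D (D (D x)) = -D x)
    (hDθ : ∀ x, D (θ x) = -θ (D x)) (hθ' : ∀ x, θ' (π x) = π (θ x))
    (hD' : ∀ x, D' (π x) = π (D x)) {u : q} (hu : θ' u = -u) (hDu : D' (D' u) = -u) :
    ∃ a, π a = u ∧ θ a = -a ∧ D (D a) = -a := by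
  obtain ⟨a, rfl, hθa⟩ := exists_lift_anti π hπ hθlin hθθ hθ' hu
  refine ⟨-D (D a), map_neg_sq_of_sq_eq_neg π hD' rfl hDu, ?_, sq_neg_sq_of_cube_eq_neg hDlin hD3 a⟩
  rw [hθlin.map_neg, sq_commute_of_anticommute hDlin hDθ, hθa, hDlin.map_neg, hDlin.map_neg]

theorem exists_lift_fixed_of_ker (hπ : Surjective π) (hθlin : IsLinearMap ℝ θ)
    (hθθ : ∀ x, θ (θ x) = x) (hDlin : IsLinearMap ℝ D) (hD3 : ∀ x, D (D (D x)) = -D x)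
    (hθ' : ∀ x, θ' (π x) = π (θ x)) (hD' : ∀ x, D' (π x) = π (D x))
    (hker : ∀ x, π x = 0 → D x = 0) {u : q} (hu : θ' u = u) (hDu : D' u = 0) :
    ∃ a, π a = u ∧ θ a = a ∧ D a = 0 := by
  obtain ⟨a, rfl, hθa⟩ := exists_lift_fixed π hπ hθlin hθθ hθ' hu
  have hDDa : D (D a) = 0 := hker _ (by rw [← hD', hDu])
  refine ⟨a, rfl, hθa, ?_⟩
  rw [← neg_neg (D a), ← hD3, hDDa, hDlin.map_zero, neg_zero]

theorem image_fixed_sq_eq_neg (hπ : Surjective π) (hθlin : IsLinearMap ℝ θ)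
    (hθθ : ∀ x, θ (θ x) = x) (hDlin : IsLinearMap ℝ D) (hD3 : ∀ x, D (D (D x)) = -D x)
    (hDθ : ∀ x, D (θ x) = -θ (D x)) (hθ' : ∀ x, θ' (π x) = π (θ x))
    (hD' : ∀ x, D' (π x) = π (D x)) :
    π '' {x | θ x = x ∧ D (D x) = -x} = {u | θ' u = u ∧ D' (D' u) = -u} := by
  ext u
  constructor
  · rintro ⟨x, ⟨hθx, hDx⟩, rfl⟩
    exact ⟨by rw [hθ', hθx], by rw [hD', hD', hDx, map_neg]⟩
  · rintro ⟨hu, hDu⟩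
    obtain ⟨a, rfl, ha⟩ :=
      exists_lift_fixed_of_sq_eq_neg π hπ hθlin hθθ hDlin hD3 hDθ hθ' hD' hu hDu
    exact ⟨a, ha, rfl⟩

theorem image_fixed_ker (hπ : Surjective π) (hθlin : IsLinearMap ℝ θ)
    (hθθ : ∀ x, θ (θ x) = x) (hDlin : IsLinearMap ℝ D) (hD3 : ∀ x, D (D (D x)) = -D x)
    (hθ' : ∀ x, θ' (π x) = π (θ x)) (hD' : ∀ x, D' (π x) = π (D x))
    (hker : ∀ x, π x = 0 → D x = 0) :
    π '' {x | θ x = x ∧ D x = 0} = {u | θ' u = u ∧ D' u = 0} := by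
  ext u
  constructor
  · rintro ⟨x, ⟨hθx, hDx⟩, rfl⟩
    exact ⟨by rw [hθ', hθx], by rw [hD', hDx, map_zero]⟩
  · rintro ⟨hu, hDu⟩
    obtain ⟨a, rfl, ha⟩ := exists_lift_fixed_of_ker π hπ hθlin hθθ hDlin hD3 hθ' hD' hker hu hDu
    exact ⟨a, ha, rfl⟩

end Lift

theorem setOf_lie_eq_image2 {L : Type*} [LieRing L] (p r : L → Prop) :
    {z : L | ∃ x y, p x ∧ r x ∧ p y ∧ r y ∧ z = ⁅x, y⁆} =
      image2 (fun x y => ⁅x, y⁆) {x | p x ∧ r x} {x | p x ∧ r x} := by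
  ext z
  simp only [mem_ofPred_eq, mem_image2, and_assoc, eq_comm (a := z), exists_and_left]

theorem span_lie_image {g q : Type*} [LieRing g] [LieAlgebra ℝ g] [LieRing q] [LieAlgebra ℝ q]
    (π : g →ₗ⁅ℝ⁆ q) {S T : Set g}
    (hST : (Submodule.span ℝ (image2 (fun x y => ⁅x, y⁆) S S) : Set g) = T) :
    (Submodule.span ℝ (image2 (fun x y => ⁅x, y⁆) (π '' S) (π '' S)) : Set q) = π '' T := by
  rw [← image_image2_distrib fun x y => π.map_lie x y]
  rw [← LieHom.coe_toLinearMap, Submodule.span_image, Submodule.map_coe, hST]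

section Transfer

variable {g q : Type*} [LieRing g] [LieAlgebra ℝ g] [LieRing q] [LieAlgebra ℝ q]
  {B : g → g → ℝ} {θ D : g → g} {B' : q → q → ℝ} {θ' D' : q → q} (π : g →ₗ⁅ℝ⁆ q)

theorem IsWeakEST.span_lie_of_surjective (h : IsWeakEST (fun x y : g => ⁅x, y⁆) B θ D)
    (hπ : Surjective π) (hker : ∀ x, π x = 0 ↔ ∀ y, B x y = 0)
    (hθ' : ∀ x, θ' (π x) = π (θ x)) (hD' : ∀ x, D' (π x) = π (D x)) :
    (Submodule.span ℝ {z : q | ∃ x y : q,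
      θ' x = x ∧ D' (D' x) = -x ∧ θ' y = y ∧ D' (D' y) = -y ∧ z = ⁅x, y⁆} : Set q)
    = {w : q | θ' w = w ∧ D' w = 0} := by
  have ⟨_, _, _, _, _, _, _, _, hθlin, hθθ, _, _, hDlin, _, _, hD3, hDθ, hspan, _⟩ := h
  rw [setOf_lie_eq_image2] at hspan ⊢
  rw [← image_fixed_sq_eq_neg π hπ hθlin hθθ hDlin hD3 hDθ hθ' hD', span_lie_image π hspan,
    image_fixed_ker π hπ hθlin hθθ hDlin hD3 hθ' hD'
      fun x hx => (h.radical_subset ((hker x).1 hx)).2]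

theorem IsWeakEST.nondegenerate_of_surjective (h : IsWeakEST (fun x y : g => ⁅x, y⁆) B θ D)
    (hπ : Surjective π) (hker : ∀ x, π x = 0 ↔ ∀ y, B x y = 0)
    (hB' : ∀ x y, B' (π x) (π y) = B x y) (hθ' : ∀ x, θ' (π x) = π (θ x))
    (hD' : ∀ x, D' (π x) = π (D x)) (u v : q) (hu : θ' u = u) (hv : θ' v = -v)
    (hDv : D' (D' v) = -v)
    (horth : ∀ u' v' : q, θ' u' = u' → θ' v' = -v' → D' (D' v') = -v' → B' (u + v) (u' + v') = 0) :
    u + v = 0 := by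
  have ⟨_, _, _, _, hBa, hBs, hBsym, _, hθlin, hθθ, _, hθB, hDlin, _, hDB, hD3, hDθ, _⟩ := h
  obtain ⟨a, rfl, hθa⟩ := exists_lift_fixed π hπ hθlin hθθ hθ' hu
  obtain ⟨b, rfl, hθb, hDb⟩ :=
    exists_lift_anti_of_sq_eq_neg π hπ hθlin hθθ hDlin hD3 hDθ hθ' hD' hv hDv
  rw [← map_add, hker]
  intro z
  obtain ⟨x, y, w, hx, ⟨hy, hDy⟩, ⟨hw, hDw⟩, rfl⟩ :=
    exists_eigen_decomposition hθlin hθθ hDlin hD3 hDθ z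
  have hxy : B (a + b) (x + y) = 0 := by
    rw [← hB', map_add, map_add]
    exact horth _ _ (by rw [hθ', hx]) (by rw [hθ', hy, map_neg]) (by rw [hD', hD', hDy, map_neg])
  have hw : B (a + b) w = 0 := by
    rw [hBa, orthogonal_of_fixed_of_anti hBs hBsym hθB hθa hw,
      orthogonal_of_sq_eq_neg_of_ker hBs hBsym hDB hDb hDw, add_zero]
  rw [hBsym, hBa, hBsym, hxy, hBsym, hw, add_zero]

theorem IsWeakEST.of_surjective (h : IsWeakEST (fun x y : g => ⁅x, y⁆) B θ D)
    (hπ : Surjective π) (hker : ∀ x, π x = 0 ↔ ∀ y, B x y = 0)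
    (hB' : ∀ x y, B' (π x) (π y) = B x y) (hθ' : ∀ x, θ' (π x) = π (θ x))
    (hD' : ∀ x, D' (π x) = π (D x)) : IsWeakEST (fun u v : q => ⁅u, v⁆) B' θ' D' := by
  have ⟨_, _, _, _, hBa, hBs, hBsym, hBinv, hθlin, hθθ, hθbr, hθB, hDlin, hDder, hDB, hD3, hDθ,
    _⟩ := h
  beta_reduce at hBinv hθbr hDder
  refine ⟨add_lie, smul_lie, lie_self, lie_lie_add_lie_lie_add_lie_lie,
    hπ.forall₃.2 fun x y z => by rw [← map_add, hB', hB', hB', hBa],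
    fun c => hπ.forall₂.2 fun x y => by rw [← map_smul, hB', hB', hBs],
    hπ.forall₂.2 fun x y => by rw [hB', hB', hBsym],
    hπ.forall₃.2 fun x y z => by beta_reduce; rw [← π.map_lie, ← π.map_lie, hB', hB', hBinv],
    ⟨hπ.forall₂.2 fun x y => by rw [← map_add, hθ', hθ', hθ', hθlin.map_add, map_add],
      fun c => hπ.forall.2 fun x => by rw [← map_smul, hθ', hθ', hθlin.map_smul, map_smul]⟩,
    hπ.forall.2 fun x => by rw [hθ', hθ', hθθ],
    hπ.forall₂.2 fun x y => by beta_reduce; rw [← π.map_lie, hθ', hθ', hθ', hθbr, π.map_lie],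
    hπ.forall₂.2 fun x y => by rw [hθ', hθ', hB', hB', hθB],
    ⟨hπ.forall₂.2 fun x y => by rw [← map_add, hD', hD', hD', hDlin.map_add, map_add],
      fun c => hπ.forall.2 fun x => by rw [← map_smul, hD', hD', hDlin.map_smul, map_smul]⟩,
    hπ.forall₂.2 fun x y => by
      beta_reduce; rw [← π.map_lie, hD', hD', hD', hDder, map_add, π.map_lie, π.map_lie],
    hπ.forall₂.2 fun x y => by rw [hD', hD', hB', hB', hDB],
    hπ.forall.2 fun x => by rw [hD', hD', hD', hD3, map_neg],
    hπ.forall.2 fun x => by rw [hθ', hD', hD', hθ', hDθ, map_neg],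
    h.span_lie_of_surjective π hπ hker hθ' hD',
    h.nondegenerate_of_surjective π hπ hker hB' hθ' hD'⟩

end Transfer

theorem exists_quotient_form {R M A : Type*} [Ring R] [AddCommGroup M] [Module R M] [AddGroup A]
    (N : Submodule R M) {B : M → M → A} (hBa : ∀ x y z, B (x + y) z = B x z + B y z)
    (hBsym : ∀ x y, B x y = B y x) (hN : ∀ x ∈ N, ∀ y, B x y = 0) :
    ∃ B' : M ⧸ N → M ⧸ N → A,
      ∀ x y, B' (Submodule.Quotient.mk x) (Submodule.Quotient.mk y) = B x y := by
  refine ⟨fun u v => Quotient.liftOn₂' u v B fun x y x' y' hx hy => ?_, fun _ _ => rfl⟩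
  rw [Submodule.quotientRel_def] at hx hy
  calc B x y = B x' y := by rw [← sub_add_cancel x x', hBa, hN _ hx, zero_add]
    _ = B x' y' := by rw [hBsym, ← sub_add_cancel y y', hBa, hN _ hy, zero_add, hBsym]

/-- For a weak extrinsic symmetric triple, the metric radical `R` is a
(central) ideal contained in `g₋⁺ = g₋ ∩ Ker D`, and the quotient `g/R` carries an
induced nondegenerate invariant inner product, isometric involution and antisymmetric
derivation making it an extrinsic symmetric triple. -/
theorem stmt7 {g : Type*} [LieRing g] [LieAlgebra ℝ g] (B : g → g → ℝ) (θ D : g → g)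
    (h : IsWeakEST (fun x y : g => ⁅x, y⁆) B θ D)
    (R : LieIdeal ℝ g) (hR : ∀ x : g, x ∈ R ↔ ∀ y : g, B x y = 0) :
    -- the metric radical is an ideal:
    (∀ x z : g, (∀ y : g, B x y = 0) → ∀ y : g, B ⁅z, x⁆ y = 0) ∧
    -- R ⊆ g₋⁺ :
    (∀ x : g, (∀ y : g, B x y = 0) → θ x = -x ∧ D x = 0) ∧
    -- induced structure on the quotient g/R is an extrinsic symmetric triple:
    ∃ (B' : (g ⧸ R) → (g ⧸ R) → ℝ) (θ' D' : (g ⧸ R) → (g ⧸ R)),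
      (∀ x y : g, B' (LieSubmodule.Quotient.mk' R x) (LieSubmodule.Quotient.mk' R y) = B x y) ∧
      (∀ x : g, θ' (LieSubmodule.Quotient.mk' R x) = LieSubmodule.Quotient.mk' R (θ x)) ∧
      (∀ x : g, D' (LieSubmodule.Quotient.mk' R x) = LieSubmodule.Quotient.mk' R (D x)) ∧
      IsWeakEST (fun u v : g ⧸ R => ⁅u, v⁆) B' θ' D' ∧
      (∀ u : g ⧸ R, (∀ v : g ⧸ R, B' u v = 0) → u = 0) := by
  have ⟨_, _, _, _, hBa, _, hBsym, hBinv, hθlin, hθθ, _, hθB, hDlin, _, hDB, _⟩ := h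
  have hRθ : ∀ x ∈ R, θ x ∈ R := fun x hx =>
    (hR _).2 (radical_apply_of_isometry hθθ hθB ((hR x).1 hx))
  have hRD : ∀ x ∈ R, D x ∈ R := fun x hx => (hR _).2 (radical_apply_of_antisymm hDB ((hR x).1 hx))
  obtain ⟨B', hB'⟩ :=
    exists_quotient_form (LieSubmodule.toSubmodule R) hBa hBsym fun x hx => (hR x).1 hx
  let π : g →ₗ⁅ℝ⁆ g ⧸ R :=
    { (LieSubmodule.Quotient.mk' R : g →ₗ[ℝ] g ⧸ R) with
      map_lie' := fun {x y} => LieSubmodule.Quotient.mk_bracket R x y }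
  have hπ : Surjective π := LieSubmodule.Quotient.surjective_mk' R
  have hker : ∀ x, π x = 0 ↔ ∀ y, B x y = 0 := fun x =>
    (LieSubmodule.Quotient.mk_eq_zero R).trans (hR x)
  let θ' := (LieSubmodule.toSubmodule R).mapQ (LieSubmodule.toSubmodule R) (hθlin.mk' θ) hRθ
  let D' := (LieSubmodule.toSubmodule R).mapQ (LieSubmodule.toSubmodule R) (hDlin.mk' D) hRD
  refine ⟨fun x z hx => radical_lie_of_invariant hBinv hx z, fun x => h.radical_subset,
    B', θ', D', hB', fun _ => rfl, fun _ => rfl,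
    h.of_surjective π hπ hker hB' (fun _ => rfl) (fun _ => rfl), ?_⟩
  exact hπ.forall.2 fun x hx => (hker x).2 fun y => hB' x y ▸ hx (π y)
end

section
/- Let (g₀, ⟨·,·⟩₀, (D₀,θ₀)) be an extrinsic symmetric triple, R a real vector space, and ω ∈ Z²(g₀,R) a cocycle satisfying θ₀*ω = −ω and D₀ω = 0 (where D₀ω(X,Y) = ω(D₀X,Y) + ω(X,D₀Y)). Define g = g₀ ⊕ R with the central extension bracket, the inner product ⟨·,·⟩₀ ⊕ 0, the involution θ₀ ⊕ (−Id), and the derivation D₀ ⊕ 0. Then (g, ⟨·,·⟩, (D,θ)) is a weak extrinsic symmetric triple. -/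
/-- The central extension of an extrinsic symmetric triple
`(g₀, B₀, (D₀, θ₀))` by `R` via a cocycle `ω` with `θ₀*ω = -ω` and `D₀ω = 0`, equipped
with the inner product `B₀ ⊕ 0`, the involution `θ₀ ⊕ (-id)` and the derivation
`D₀ ⊕ 0`, is a weak extrinsic symmetric triple. -/
theorem stmt9 {g₀ R : Type*} [LieRing g₀] [LieAlgebra ℝ g₀] [AddCommGroup R] [Module ℝ R]
    (B₀ : g₀ → g₀ → ℝ) (θ₀ D₀ : g₀ → g₀)
    (h₀ : IsWeakEST (fun x y : g₀ => ⁅x, y⁆) B₀ θ₀ D₀)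
    (hnd : ∀ x : g₀, (∀ y : g₀, B₀ x y = 0) → x = 0)
    (ω : g₀ →ₗ[ℝ] g₀ →ₗ[ℝ] R) (halt : ∀ x : g₀, ω x x = 0)
    (hcoc : ∀ x y z : g₀, ω ⁅x, y⁆ z + ω ⁅y, z⁆ x + ω ⁅z, x⁆ y = 0)
    (hθω : ∀ x y : g₀, ω (θ₀ x) (θ₀ y) = -ω x y)
    (hDω : ∀ x y : g₀, ω (D₀ x) y + ω x (D₀ y) = 0) :
    IsWeakEST (fun u v : g₀ × R => ((⁅u.1, v.1⁆ : g₀), ω u.1 v.1))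
      (fun u v : g₀ × R => B₀ u.1 v.1)
      (fun u : g₀ × R => (θ₀ u.1, -u.2))
      (fun u : g₀ × R => (D₀ u.1, 0)) := by

  obtain ⟨hbr1, hbr2, hbr3, hbr4, hB1, hB2, hB3, hB4, hθlin, hθinv, hθbr, hθB,
    hDlin, hDder, hDB, hD3, hDθ, hspan, hndg⟩ := h₀
  have hrzero : ∀ r : R, -r = r → r = 0 := by
    intro r hr
    have h2 : (2:ℝ) • r = 0 := by
      rw [two_smul]
      nth_rewrite 1 [← hr]
      exact neg_add_cancel r
    have : r = ((1:ℝ)/2) • ((2:ℝ) • r) := by rw [smul_smul]; norm_num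
    rw [this, h2, smul_zero]
  refine ⟨?_, ?_, ?_, ?_, ?_, ?_, ?_, ?_, ?_, ?_, ?_, ?_, ?_, ?_, ?_, ?_, ?_, ?_, ?_⟩
  · intro x y z
    exact Prod.ext (hbr1 x.1 y.1 z.1) (by simp)
  · intro c x y
    exact Prod.ext (hbr2 c x.1 y.1) (by simp)
  · intro x
    exact Prod.ext (hbr3 x.1) (halt x.1)
  · intro x y z
    exact Prod.ext (hbr4 x.1 y.1 z.1) (hcoc x.1 y.1 z.1)
  · intro x y z; exact hB1 x.1 y.1 z.1
  · intro c x y; exact hB2 c x.1 y.1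
  · intro x y; exact hB3 x.1 y.1
  · intro x y z; exact hB4 x.1 y.1 z.1
  · exact ⟨fun x y => Prod.ext (hθlin.map_add x.1 y.1) (by simp [add_comm]),
      fun c x => Prod.ext (hθlin.map_smul c x.1) (by simp)⟩
  · intro x
    exact Prod.ext (hθinv x.1) (by simp)
  · intro x y
    refine Prod.ext (hθbr x.1 y.1) ?_
    show -(ω x.1 y.1) = ω (θ₀ x.1) (θ₀ y.1)
    rw [hθω]
  · intro x y; exact hθB x.1 y.1
  · exact ⟨fun x y => Prod.ext (hDlin.map_add x.1 y.1) (by simp),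
      fun c x => Prod.ext (hDlin.map_smul c x.1) (by simp)⟩
  · intro x y
    refine Prod.ext (hDder x.1 y.1) ?_
    have := hDω x.1 y.1
    simp only [Prod.snd_add]
    linear_combination (norm := module) -this
  · intro x y; exact hDB x.1 y.1
  · intro x
    refine Prod.ext (hD3 x.1) ?_
    simp [hDlin.map_zero]
  · intro x
    refine Prod.ext (hDθ x.1) ?_
    simp [hDlin.map_zero]
  · -- span condition
    have hset : {z : g₀ × R | ∃ x y : g₀ × R,
        (θ₀ x.1, -x.2) = x ∧ (D₀ (D₀ x.1), (0:R)) = -x ∧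
        (θ₀ y.1, -y.2) = y ∧ (D₀ (D₀ y.1), (0:R)) = -y ∧
        z = (⁅x.1, y.1⁆, ω x.1 y.1)}
        = (LinearMap.inl ℝ g₀ R) '' {z : g₀ | ∃ x y : g₀,
            θ₀ x = x ∧ D₀ (D₀ x) = -x ∧ θ₀ y = y ∧ D₀ (D₀ y) = -y ∧ z = ⁅x, y⁆} := by
      ext z
      constructor
      · rintro ⟨x, y, hx1, hx2, hy1, hy2, rfl⟩
        have hx1' : θ₀ x.1 = x.1 := congrArg Prod.fst hx1
        have hy1' : θ₀ y.1 = y.1 := congrArg Prod.fst hy1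
        have hx2' : D₀ (D₀ x.1) = -x.1 := congrArg Prod.fst hx2
        have hy2' : D₀ (D₀ y.1) = -y.1 := congrArg Prod.fst hy2
        have hω : ω x.1 y.1 = 0 := by
          have := hθω x.1 y.1
          rw [hx1', hy1'] at this
          have h0 : (2:ℝ) • ω x.1 y.1 = 0 := by
            rw [two_smul]
            nth_rewrite 1 [this]
            exact neg_add_cancel _
          have : ω x.1 y.1 = ((1:ℝ)/2) • ((2:ℝ) • ω x.1 y.1) := by
            rw [smul_smul]; norm_num
          rw [this, h0, smul_zero]
        exact ⟨⁅x.1, y.1⁆, ⟨x.1, y.1, hx1', hx2', hy1', hy2', rfl⟩,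
          by simp [LinearMap.inl_apply, hω]⟩
      · rintro ⟨w, ⟨x, y, hx1, hx2, hy1, hy2, rfl⟩, rfl⟩
        refine ⟨(x, 0), (y, 0), ?_, ?_, ?_, ?_, ?_⟩
        · exact Prod.ext hx1 (by simp)
        · exact Prod.ext hx2 (by simp)
        · exact Prod.ext hy1 (by simp)
        · exact Prod.ext hy2 (by simp)
        · have hω : ω x y = 0 := by
            have := hθω x y
            rw [hx1, hy1] at this
            have h0 : (2:ℝ) • ω x y = 0 := by
              rw [two_smul]
              nth_rewrite 1 [this]
              exact neg_add_cancel _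
            have : ω x y = ((1:ℝ)/2) • ((2:ℝ) • ω x y) := by
              rw [smul_smul]; norm_num
            rw [this, h0, smul_zero]
          simp [LinearMap.inl_apply, hω]
    rw [hset, Submodule.span_image]
    ext z
    simp only [Submodule.map_coe, Set.mem_image, SetLike.mem_coe]
    constructor
    · rintro ⟨w, hw, rfl⟩
      have hw' : w ∈ ({w : g₀ | θ₀ w = w ∧ D₀ w = 0} : Set g₀) := by
        rw [← hspan]; exact hw
      obtain ⟨h1, h2⟩ := hw'
      exact ⟨Prod.ext h1 (by simp), Prod.ext h2 rfl⟩
    · rintro ⟨h1, h2⟩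
      have hz2 : z.2 = 0 := hrzero z.2 (congrArg Prod.snd h1)
      have hw : z.1 ∈ ({w : g₀ | θ₀ w = w ∧ D₀ w = 0} : Set g₀) :=
        ⟨congrArg Prod.fst h1, congrArg Prod.fst h2⟩
      rw [← hspan] at hw
      exact ⟨z.1, hw, by simp [LinearMap.inl_apply, ← hz2]⟩
  · -- nondegeneracy
    intro x y hx hy1 hy2 hB
    have hx1 : θ₀ x.1 = x.1 := congrArg Prod.fst hx
    have hx2 : x.2 = 0 := hrzero x.2 (congrArg Prod.snd hx)
    have hy1' : θ₀ y.1 = -y.1 := congrArg Prod.fst hy1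
    have hy2' : D₀ (D₀ y.1) = -y.1 := congrArg Prod.fst hy2
    have hy22 : y.2 = 0 := by
      have := congrArg Prod.snd hy2
      simpa using this.symm
    have h1 : x.1 + y.1 = 0 := by
      apply hndg x.1 y.1 hx1 hy1' hy2'
      intro u v hu hv1 hv2
      exact hB (u, 0) (v, 0) (Prod.ext hu (by simp)) (Prod.ext hv1 (by simp))
        (Prod.ext hv2 (by simp))
    have : x + y = (x.1 + y.1, x.2 + y.2) := rfl
    rw [this, h1, hx2, hy22, add_zero]
    rfl
end

section
/- Let (g, ⟨·,·⟩, (D,θ)) be a weak extrinsic symmetric triple. Define φ : g₊ → so(g₋) ⋉ g₋ by φ(X) = ((ad X)|_{g₋}, −D(X)). Then φ is an injective Lie algebra homomorphism. -/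
/-- For a weak extrinsic symmetric triple, the map
`φ : g₊ → so(g₋) ⋉ g₋`, `φ(X) = ((ad X)|_{g₋}, -D X)`, is an injective Lie algebra
homomorphism; the homomorphism property means the operator part of `φ⁅X,Y⁆` is the
commutator of the operator parts and the translation part of `φ⁅X,Y⁆` is
`(ad X)(-D Y) - (ad Y)(-D X)`, and injectivity means `φ X = 0 → X = 0`. -/
theorem stmt11 {g : Type*} [LieRing g] [LieAlgebra ℝ g] (B : g → g → ℝ) (θ D : g → g)
    (h : IsWeakEST (fun x y : g => ⁅x, y⁆) B θ D) :
    (∀ X Y : g, θ X = X → θ Y = Y →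
      (∀ v : g, θ v = -v → ⁅(⁅X, Y⁆ : g), v⁆ = ⁅X, ⁅Y, v⁆⁆ - ⁅Y, ⁅X, v⁆⁆) ∧
        -D ⁅X, Y⁆ = ⁅X, -D Y⁆ - ⁅Y, -D X⁆) ∧
    (∀ X : g, θ X = X → (∀ v : g, θ v = -v → ⁅X, v⁆ = 0) → D X = 0 → X = 0) := by
  obtain ⟨hba, hbs, hbx, hbj, hBa, hBs, hBsym, hBinv, hθlin, hθθ, hθbr, hθB,
    hDlin, hDder, hDanti, hD3, hDθ, hspan, hnd⟩ := h
  have hB0 : ∀ y : g, B 0 y = 0 := by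
    intro y
    have := hBa 0 0 y
    simp only [add_zero] at this
    linarith
  have hB0' : ∀ y : g, B y 0 = 0 := fun y => by rw [hBsym]; exact hB0 y
  have hBa2 : ∀ x y z : g, B x (y + z) = B x y + B x z := by
    intro x y z; rw [hBsym, hBa, hBsym, hBsym z]
  have hBneg2 : ∀ x y : g, B x (-y) = -B x y := by
    intro x y
    rw [hBsym, show (-y : g) = (-1 : ℝ) • y by simp, hBs, hBsym]; ring
  constructor
  · intro X Y _ _
    refine ⟨fun v _ => lie_lie X Y v, ?_⟩
    rw [hDder X Y, lie_neg, lie_neg, ← lie_skew Y (D X)]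
    abel
  · intro X hθX hadX hDX
    -- B X w = 0 for w in g₊⁺
    have hker : ∀ w : g, θ w = w → D w = 0 → B X w = 0 := by
      intro w hw1 hw2
      have hmem : w ∈ Submodule.span ℝ {z : g | ∃ x y : g,
          θ x = x ∧ D (D x) = -x ∧ θ y = y ∧ D (D y) = -y ∧ z = ⁅x, y⁆} := by
        have : w ∈ ({w : g | θ w = w ∧ D w = 0} : Set g) := ⟨hw1, hw2⟩
        rw [← hspan] at this
        exact this
      refine Submodule.span_induction ?_ ?_ ?_ ?_ hmem
      · rintro z ⟨a, b, hθa, hD2a, hθb, hD2b, rfl⟩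
        -- [X, a] = 0
        have hDaneg : θ (D a) = -(D a) := by
          have h1 := hDθ a
          rw [hθa] at h1
          have h2 := congrArg θ h1
          rw [hθlin.map_neg, hθθ] at h2
          exact h2
        have hXa : ⁅X, a⁆ = 0 := by
          have h1 : ⁅X, D a⁆ = 0 := hadX _ hDaneg
          have h2 : D ⁅X, D a⁆ = ⁅D X, D a⁆ + ⁅X, D (D a)⁆ := hDder X (D a)
          rw [h1, hDX, hD2a, zero_lie, zero_add, lie_neg] at h2
          have h3 : D (0 : g) = 0 := hDlin.map_zero
          rw [h3] at h2
          have := h2.symm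
          rw [neg_eq_zero] at this
          exact this
        have h4 : B ⁅a, X⁆ b + B X ⁅a, b⁆ = 0 := hBinv a X b
        rw [show ⁅a, X⁆ = -⁅X, a⁆ from (lie_skew a X).symm, hXa, neg_zero, hB0] at h4
        linarith
      · exact hB0' X
      · intro x y _ _ hx hy
        rw [hBa2, hx, hy, add_zero]
      · intro c x _ hx
        rw [hBsym, hBs, hBsym, hx, mul_zero]
    have key : X + 0 = 0 := by
      refine hnd X 0 hθX (by rw [hθlin.map_zero, neg_zero])
        (by rw [hDlin.map_zero, hDlin.map_zero, neg_zero]) ?_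
      intro u v hθu hθv hD2v
      have hBXv : B X v = 0 := by
        have := hθB X v
        rw [hθX, hθv, hBneg2] at this
        linarith
      have hBXu : B X u = 0 := by
        have h1 : B X (u + D (D u)) = 0 := by
          refine hker _ ?_ ?_
          · have hcomm : θ (D (D u)) = D (D u) := by
              have e1 : θ (D u) = -D u := by
                have f1 := hDθ u
                rw [hθu] at f1
                have f2 := congrArg θ f1
                rw [hθlin.map_neg, hθθ] at f2
                exact f2
              have e2 := hDθ (D u)
              rw [e1, hDlin.map_neg] at e2
              exact (neg_injective e2).symm
            rw [hθlin.map_add, hθu, hcomm]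
          · rw [hDlin.map_add, hD3, add_neg_cancel]
        have h2 : B X (D (D u)) = 0 := by
          have := hDanti X (D u)
          rw [hDX, hB0] at this
          linarith
        rw [hBa2] at h1
        linarith
      rw [add_zero, hBa2, hBXu, hBXv, add_zero]
    rwa [add_zero] at key
end

section
/- Let g be a Lie algebra with an invariant symmetric bilinear form ⟨·,·⟩ and let D be an antisymmetric derivation of g with D³ = −D. Then the involution τ_D (equal to Id on Ker D and −Id on {X | D²X = −X}) is an isometric Lie algebra automorphism. -/
/-- If `g` carries an invariant symmetric bilinear form and `D` is an
antisymmetric derivation with `D³ = -D`, then `τ_D` (identity on `Ker D`, minus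
identity on `{X | D²X = -X}`) is an isometric Lie algebra automorphism, and it is
involutive. -/
theorem stmt12 {g : Type*} [LieRing g] [LieAlgebra ℝ g]
    (B : g →ₗ[ℝ] g →ₗ[ℝ] ℝ) (hsym : ∀ x y : g, B x y = B y x)
    (hinv : ∀ x y z : g, B ⁅x, y⁆ z + B y ⁅x, z⁆ = 0)
    (D : g →ₗ[ℝ] g)
    (hder : ∀ x y : g, D ⁅x, y⁆ = ⁅D x, y⁆ + ⁅x, D y⁆)
    (hanti : ∀ x y : g, B (D x) y = -B x (D y))
    (hD3 : ∀ x : g, D (D (D x)) = -D x)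
    (τ : g →ₗ[ℝ] g)
    (hτp : ∀ x : g, D x = 0 → τ x = x)
    (hτm : ∀ x : g, D (D x) = -x → τ x = -x) :
    (∀ x : g, τ (τ x) = x) ∧ Function.Bijective τ ∧
      (∀ x y : g, τ ⁅x, y⁆ = ⁅τ x, τ y⁆) ∧
      (∀ x y : g, B (τ x) (τ y) = B x y) := by
  -- τ x = x + 2 D²x
  have hτ : ∀ x : g, τ x = x + (2:ℝ) • D (D x) := by
    intro x
    have h1 : τ (x + D (D x)) = x + D (D x) := by
      apply hτp
      rw [map_add, hD3 x]
      simp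
    have h2 : τ (D (D x)) = -(D (D x)) := by
      apply hτm
      have : D (D (D (D x))) = D (-D x) := by rw [hD3 x]
      simpa using this
    have h3 := map_add τ x (D (D x))
    rw [h1, h2] at h3
    linear_combination (norm := module) -h3
  -- D⁴ = -D²
  have hD4 : ∀ x : g, D (D (D (D x))) = -(D (D x)) := by
    intro x
    have := hD3 (D x)
    simpa using this
  -- key bracket identity ⁅Dx, Dy⁆ = ⁅D²x, D²y⁆
  have hbr : ∀ x y : g, ⁅D x, D y⁆ = ⁅D (D x), D (D y)⁆ := by
    intro x y
    set u := D x with hu'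
    set v := D y with hv'
    have hu : D (D u) = -u := hD3 x
    have hv : D (D v) = -v := hD3 y
    have hDu : D (D (D u)) = -(D u) := by rw [hu]; simp
    have hDv : D (D (D v)) = -(D v) := by rw [hv]; simp
    set w := ⁅u, v⁆ with hw'
    set a := ⁅D u, D v⁆ with ha'
    have h1 : D (D w) = -(2:ℝ) • w + (2:ℝ) • a := by
      rw [hw', hder, map_add, hder, hder, hu, hv]
      simp only [neg_lie, lie_neg]
      module
    have h2 : D (D a) = -(2:ℝ) • a + (2:ℝ) • w := by
      rw [ha', hder, map_add, hder, hder, hDu, hDv, hu, hv]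
      simp only [neg_lie, lie_neg, neg_neg]
      module
    have h4 : D (D (-(2:ℝ) • w + (2:ℝ) • a)) = -(-(2:ℝ) • w + (2:ℝ) • a) := by
      rw [← h1]; exact hD4 w
    have h5 : D (D (-(2:ℝ) • w + (2:ℝ) • a)) = (8:ℝ) • w - (8:ℝ) • a := by
      rw [map_add, map_smul, map_smul, map_add, map_smul, map_smul, h1, h2]
      module
    have h6 : (6:ℝ) • (w - a) = 0 := by
      have := h4.symm.trans h5
      linear_combination (norm := module) -this
    have h7 : w - a = 0 := by
      have := smul_eq_zero.mp h6
      rcases this with h | h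
      · norm_num at h
      · exact h
    have h8 : w = a := by linear_combination (norm := module) h7
    exact h8
  have hinvol : ∀ x : g, τ (τ x) = x := by
    intro x
    rw [hτ (τ x), hτ x]
    simp only [map_add, map_smul, hD4 x]
    module
  refine ⟨hinvol, Function.Involutive.bijective hinvol, ?_, ?_⟩
  · intro x y
    rw [hτ, hτ, hτ, hder, map_add, hder, hder]
    have hb := hbr x y
    simp only [lie_add, add_lie, lie_smul, smul_lie]
    linear_combination (norm := module) (4:ℝ) • hb
  · intro x y
    rw [hτ, hτ]
    have e1 : B (D (D x)) y = -B (D x) (D y) := hanti (D x) y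
    have e2 : B x (D (D y)) = -B (D x) (D y) := by
      rw [hsym x (D (D y)), hanti (D y) x, hsym (D y) (D x)]
    have e3 : B (D (D x)) (D (D y)) = B (D x) (D y) := by
      rw [hanti (D x) (D (D y)), hsym (D x) (D (D (D y))), hD3 y]
      simp [hsym (D y) (D x)]
    simp only [map_add, map_smul, LinearMap.add_apply, LinearMap.smul_apply, smul_eq_mul]
    rw [e1, e2, e3]
    ring
end

section
/- Let (g, ⟨·,·⟩, (D,θ)) be a weak extrinsic symmetric triple. Then the quadruple (g₊, ⟨·,·⟩|_{g₊×g₊}, τ_D|_{g₊}) is a symmetric triple: the inner product on g₊ is nondegenerate and invariant, τ_D restricts to an isometric involutive automorphism of g₊, and [g₊⁻, g₊⁻] = g₊⁺, where g₊^± are the ±1-eigenspaces of τ_D on g₊. -/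
/-- For a weak extrinsic symmetric triple `(g, B, (D, θ))`, the triple
`(g₊, B|_{g₊×g₊}, τ_D|_{g₊})` is a symmetric triple: `g₊` is a subalgebra, `B` is
nondegenerate (and invariant) on `g₊`, `τ_D` restricts to an isometric involutive
automorphism of `g₊`, and the `+1`-eigenspace of `τ_D` in `g₊` is spanned by brackets
of elements of the `-1`-eigenspace `g₊⁻`. -/
theorem stmt14 {g : Type*} [LieRing g] [LieAlgebra ℝ g] (B : g → g → ℝ) (θ D : g → g)
    (h : IsWeakEST (fun x y : g => ⁅x, y⁆) B θ D)
    (τ : g →ₗ[ℝ] g)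
    (hτp : ∀ x : g, D x = 0 → τ x = x)
    (hτm : ∀ x : g, D (D x) = -x → τ x = -x) :
    -- g₊ is a subalgebra:
    (∀ x y : g, θ x = x → θ y = y → θ ⁅x, y⁆ = ⁅x, y⁆) ∧
    -- τ_D restricts to g₊:
    (∀ x : g, θ x = x → θ (τ x) = τ x) ∧
    -- B is nondegenerate on g₊:
    (∀ x : g, θ x = x → (∀ y : g, θ y = y → B x y = 0) → x = 0) ∧
    -- B is invariant on g₊:
    (∀ x y z : g, θ x = x → θ y = y → θ z = z → B ⁅x, y⁆ z + B y ⁅x, z⁆ = 0) ∧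
    -- τ_D is involutive, an automorphism and isometric on g₊:
    (∀ x : g, θ x = x → τ (τ x) = x) ∧
    (∀ x y : g, θ x = x → θ y = y → τ ⁅x, y⁆ = ⁅τ x, τ y⁆) ∧
    (∀ x y : g, θ x = x → θ y = y → B (τ x) (τ y) = B x y) ∧
    -- [g₊⁻, g₊⁻] = g₊⁺ for the eigenspaces of τ_D on g₊:
    ((Submodule.span ℝ {z : g | ∃ x y : g,
        (θ x = x ∧ τ x = -x) ∧ (θ y = y ∧ τ y = -y) ∧ z = ⁅x, y⁆} : Set g)
      = {w : g | θ w = w ∧ τ w = w}) := by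
  obtain ⟨-, -, -, -, Badd, Bsmul, Bsym, Binv, θlin, θθ, θbr, θiso, Dlin, Dder,
    Dskew, D3, Dθ, hspan, hnd⟩ := h
  -- basic linearity facts
  have Dadd : ∀ a b : g, D (a + b) = D a + D b := Dlin.map_add
  have Dneg : ∀ a : g, D (-a) = -D a := Dlin.map_neg
  have Dzero : D (0 : g) = 0 := Dlin.map_zero
  have θneg : ∀ a : g, θ (-a) = -θ a := θlin.map_neg
  have θD : ∀ a : g, θ (D a) = -D (θ a) := by
    intro a; rw [Dθ a, neg_neg]
  have θD2 : ∀ a : g, θ (D (D a)) = D (D (θ a)) := by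
    intro a; rw [θD, θD, Dneg, neg_neg]
  have half : ∀ a : g, a + a = 0 → a = 0 := by
    intro a ha
    have h2 : a = (2:ℝ)⁻¹ • (a + a) := by
      rw [← two_smul ℝ a, smul_smul]; norm_num
    rw [ha, smul_zero] at h2; exact h2
  -- the formula for τ
  have hτDD : ∀ a : g, τ (D (D a)) = -(D (D a)) := fun a => hτm _ (D3 (D a))
  have htau : ∀ x : g, τ x = x + (D (D x) + D (D x)) := by
    intro x
    have h1 : τ (x + D (D x)) = x + D (D x) := by
      refine hτp _ ?_
      rw [Dadd, D3]; abel
    have h3 : x = (x + D (D x)) + (-(D (D x))) := by abel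
    calc τ x = τ ((x + D (D x)) + (-(D (D x)))) := by rw [← h3]
      _ = τ (x + D (D x)) + τ (-(D (D x))) := map_add τ _ _
      _ = (x + D (D x)) + (D (D x)) := by
          rw [h1, map_neg, hτDD, neg_neg]
      _ = x + (D (D x) + D (D x)) := by abel
  -- B facts
  have Bneg1 : ∀ a b : g, B (-a) b = -B a b := by
    intro a b
    have := Bsmul (-1) a b
    simpa using this
  have Badd2 : ∀ a b c : g, B a (b + c) = B a b + B a c := by
    intro a b c; rw [Bsym, Badd, Bsym b a, Bsym c a]
  have Bneg2 : ∀ a b : g, B a (-b) = -B a b := by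
    intro a b; rw [Bsym, Bneg1, Bsym]
  have BD : ∀ a b : g, B (D a) b = -B a (D b) := by
    intro a b; have := Dskew a b; linarith
  have BD2 : ∀ a b : g, B (D (D a)) b = B a (D (D b)) := by
    intro a b
    have h1 := BD (D a) b
    have h2 := BD a (D b)
    linarith
  -- bracket of two elements of g₊⁻ lies in g₊⁺
  have hDbr0 : ∀ b d : g, θ b = b → D (D b) = -b → θ d = d → D (D d) = -d →
      D ⁅b, d⁆ = 0 := by
    intro b d hb hb2 hd hd2
    have hmem : ⁅b, d⁆ ∈ (Submodule.span ℝ {z : g | ∃ x y : g,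
        θ x = x ∧ D (D x) = -x ∧ θ y = y ∧ D (D y) = -y ∧ z = ⁅x, y⁆} : Set g) :=
      Submodule.subset_span ⟨b, d, hb, hb2, hd, hd2, rfl⟩
    rw [hspan] at hmem
    exact hmem.2
  have hD2br : ∀ x y : g, D (D ⁅x, y⁆) =
      ⁅D (D x), y⁆ + (⁅D x, D y⁆ + ⁅D x, D y⁆) + ⁅x, D (D y)⁆ := by
    intro x y
    rw [Dder, Dadd, Dder, Dder]; abel
  have hbrDD : ∀ b d : g, θ b = b → D (D b) = -b → θ d = d → D (D d) = -d →
      ⁅D b, D d⁆ = ⁅b, d⁆ := by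
    intro b d hb hb2 hd hd2
    have h0 : D (D ⁅b, d⁆) = 0 := by rw [hDbr0 b d hb hb2 hd hd2, Dzero]
    have h1 := hD2br b d
    rw [h0, hb2, hd2, neg_lie, lie_neg] at h1
    have h2 : (⁅D b, D d⁆ - ⁅b, d⁆) + (⁅D b, D d⁆ - ⁅b, d⁆) = 0 := by
      have : (0:g) = -⁅b, d⁆ + (⁅D b, D d⁆ + ⁅D b, D d⁆) + -⁅b, d⁆ := h1
      rw [eq_comm] at this
      calc (⁅D b, D d⁆ - ⁅b, d⁆) + (⁅D b, D d⁆ - ⁅b, d⁆)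
          = -⁅b, d⁆ + (⁅D b, D d⁆ + ⁅D b, D d⁆) + -⁅b, d⁆ := by abel
        _ = 0 := this
    have := half _ h2
    exact sub_eq_zero.mp this
  -- key identity on g₊
  have key : ∀ x y : g, θ x = x → θ y = y → ⁅D x, D y⁆ = ⁅D (D x), D (D y)⁆ := by
    intro x y hx hy
    have hbθ : θ (-(D (D x))) = -(D (D x)) := by rw [θneg, θD2, hx]
    have hdθ : θ (-(D (D y))) = -(D (D y)) := by rw [θneg, θD2, hy]
    have hb2 : D (D (-(D (D x)))) = -(-(D (D x))) := by
      rw [Dneg, Dneg, D3 (D x)]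
    have hd2 : D (D (-(D (D y)))) = -(-(D (D y))) := by
      rw [Dneg, Dneg, D3 (D y)]
    have h1 := hbrDD _ _ hbθ hb2 hdθ hd2
    rw [Dneg, Dneg, D3, D3, neg_neg, neg_neg, neg_lie, lie_neg, neg_neg] at h1
    exact h1
  -- iff characterizations of the eigenspaces of τ
  have τm_iff : ∀ x : g, τ x = -x ↔ D (D x) = -x := by
    intro x
    constructor
    · intro hx
      have h1 : x + (D (D x) + D (D x)) = -x := by rw [← htau, hx]
      have h2 : (D (D x) + x) + (D (D x) + x) = 0 := by
        calc (D (D x) + x) + (D (D x) + x) = (x + (D (D x) + D (D x))) + x := by abel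
          _ = -x + x := by rw [h1]
          _ = 0 := by abel
      have := half _ h2
      exact eq_neg_of_add_eq_zero_left this
    · exact hτm x
  have τp_iff : ∀ x : g, τ x = x ↔ D x = 0 := by
    intro x
    constructor
    · intro hx
      have h1 : x + (D (D x) + D (D x)) = x := by rw [← htau, hx]
      have h2 : D (D x) + D (D x) = 0 := by
        have : x + (D (D x) + D (D x)) = x + 0 := by rw [h1, add_zero]
        exact add_left_cancel this
      have h3 := half _ h2
      have h4 : D (D (D x)) = 0 := by rw [h3, Dzero]
      have h5 := D3 x
      rw [h4, eq_comm, neg_eq_zero] at h5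
      exact h5
    · exact hτp x
  refine ⟨?_, ?_, ?_, ?_, ?_, ?_, ?_, ?_⟩
  · intro x y hx hy
    rw [θbr, hx, hy]
  · intro x hx
    rw [htau, θlin.map_add, θlin.map_add, θD2, hx]
  · intro x hx hB
    have h0 : x + (0:g) = 0 := by
      refine hnd x 0 hx (by rw [θlin.map_zero, neg_zero]) (by rw [Dzero, Dzero, neg_zero]) ?_
      intro u v hu hv hv2
      have hBu : B x u = 0 := hB u hu
      have hBv : B x v = 0 := by
        have h1 : B x v = B (θ x) (θ v) := (θiso x v).symm
        rw [hx, hv, Bneg2] at h1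
        linarith
      rw [add_zero, Badd2, hBu, hBv, add_zero]
    rwa [add_zero] at h0
  · intro x y z _ _ _
    exact Binv x y z
  · intro x _
    calc τ (τ x) = τ (x + (D (D x) + D (D x))) := by rw [htau x]
      _ = τ x + (τ (D (D x)) + τ (D (D x))) := by rw [map_add, map_add]
      _ = (x + (D (D x) + D (D x))) + (-(D (D x)) + -(D (D x))) := by
          rw [htau x, hτDD]
      _ = x := by abel
  · intro x y hx hy
    rw [htau ⁅x, y⁆, htau x, htau y, hD2br, key x y hx hy]
    simp only [add_lie, lie_add]
    abel
  · intro x y hx hy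
    rw [htau x, htau y]
    simp only [Badd, Badd2]
    have e1 : B (D (D x)) y = B x (D (D y)) := BD2 x y
    have e2 : B (D (D x)) (D (D y)) = -B x (D (D y)) := by
      rw [BD, D3, Bneg2, BD]; ring
    rw [e1, e2]; ring
  · have hset : {z : g | ∃ x y : g,
        (θ x = x ∧ τ x = -x) ∧ (θ y = y ∧ τ y = -y) ∧ z = ⁅x, y⁆} =
        {z : g | ∃ x y : g,
        θ x = x ∧ D (D x) = -x ∧ θ y = y ∧ D (D y) = -y ∧ z = ⁅x, y⁆} := by
      ext z
      constructor
      · rintro ⟨x, y, ⟨hx1, hx2⟩, ⟨hy1, hy2⟩, hz⟩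
        exact ⟨x, y, hx1, (τm_iff x).mp hx2, hy1, (τm_iff y).mp hy2, hz⟩
      · rintro ⟨x, y, hx1, hx2, hy1, hy2, hz⟩
        exact ⟨x, y, ⟨hx1, (τm_iff x).mpr hx2⟩, ⟨hy1, (τm_iff y).mpr hy2⟩, hz⟩
    have hset2 : {w : g | θ w = w ∧ τ w = w} = {w : g | θ w = w ∧ D w = 0} :=
      Set.ext fun w => and_congr_right fun _ => τp_iff w
    rw [hset, hset2]
    exact hspan
end

section
/- Let (l, θ_l) be a Lie algebra with involutive automorphism, (a, ⟨·,·⟩_a) a nondegenerate inner product space with an involutive isometry θ_a, and ρ : l → so(a) an orthogonal representation satisfying θ_a ∘ ρ(θ_l(L)) = ρ(L) ∘ θ_a for all L ∈ l. On g = l* ⊕ a ⊕ l define the bracket extending that of the semidirect sum a ⋊_ρ l by: [L + A, Z] = ad*(L)(Z) for Z ∈ l*, and the l*-component of [A₁+L₁, A₂+L₂] equals the functional ⟨ρ(·)A₁, A₂⟩. Then g is a Lie algebra, and the inner product ⟨·,·⟩ on g determined by: l and l* isotropic, a ⊥ (l* ⊕ l), ⟨·,·⟩|_{a×a} = ⟨·,·⟩_a,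 and ⟨·,·⟩|_{l*×l} the dual pairing, is nondegenerate and invariant; moreover θ = θ_l* ⊕ θ_a ⊕ θ_l is an isometric involutive automorphism of g. -/
section

variable {l a : Type*} [LieRing l] [LieAlgebra ℝ l]
  [AddCommGroup a] [Module ℝ a]

/-- The coadjoint action: `(ad*(L) Z)(L') = -Z ⁅L, L'⁆`. -/
def coadAct (L : l) (Z : Module.Dual ℝ l) : Module.Dual ℝ l :=
  -(Z ∘ₗ LieAlgebra.ad ℝ l L)

/-- The `l*`-valued form `β(A₁, A₂) = ⟨ρ(·) A₁, A₂⟩`. -/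
def betaForm (Ba : a →ₗ[ℝ] a →ₗ[ℝ] ℝ) (ρ : l →ₗ[ℝ] Module.End ℝ a)
    (A₁ A₂ : a) : Module.Dual ℝ l :=
  (Ba.flip A₂) ∘ₗ ((LinearMap.flip ρ) A₁)

/-- The bracket on `g = l* ⊕ a ⊕ l` of the quadratic extension. -/
def dBracket (Ba : a →ₗ[ℝ] a →ₗ[ℝ] ℝ) (ρ : l →ₗ[ℝ] Module.End ℝ a)
    (u v : Module.Dual ℝ l × a × l) : Module.Dual ℝ l × a × l :=
  (coadAct u.2.2 v.1 - coadAct v.2.2 u.1 + betaForm Ba ρ u.2.1 v.2.1,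
   ρ u.2.2 v.2.1 - ρ v.2.2 u.2.1,
   ⁅u.2.2, v.2.2⁆)

/-- The inner product on `g = l* ⊕ a ⊕ l`: `l` and `l*` isotropic and dually paired,
`a` orthogonal to both, the given product on `a`. -/
def dForm (Ba : a →ₗ[ℝ] a →ₗ[ℝ] ℝ) (u v : Module.Dual ℝ l × a × l) : ℝ :=
  u.1 v.2.2 + v.1 u.2.2 + Ba u.2.1 v.2.1

/-- The involution `θ = θ_{l*} ⊕ θ_a ⊕ θ_l` on `g = l* ⊕ a ⊕ l`. -/
def dInvolution (θl : l →ₗ[ℝ] l) (θa : a →ₗ[ℝ] a)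
    (u : Module.Dual ℝ l × a × l) : Module.Dual ℝ l × a × l :=
  (θl.dualMap u.1, θa u.2.1, θl u.2.2)

/-- Given a Lie algebra `l` with involutive automorphism `θ_l`, a
nondegenerate inner product space `(a, Ba)` with involutive isometry `θ_a`, and an
orthogonal representation `ρ` of `l` on `a` with `θ_a ∘ ρ(θ_l L) = ρ(L) ∘ θ_a`, the
space `g = l* ⊕ a ⊕ l` with the bracket `dBracket` is a Lie algebra, the inner
product `dForm` is nondegenerate and invariant, and `θ = θ_{l*} ⊕ θ_a ⊕ θ_l` is an
isometric involutive automorphism. -/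
theorem stmt16 [FiniteDimensional ℝ l] [FiniteDimensional ℝ a]
    (θl : l →ₗ[ℝ] l) (hθl2 : ∀ L : l, θl (θl L) = L)
    (hθlbr : ∀ L L' : l, θl ⁅L, L'⁆ = ⁅θl L, θl L'⁆)
    (Ba : a →ₗ[ℝ] a →ₗ[ℝ] ℝ) (hBsym : ∀ A B : a, Ba A B = Ba B A)
    (hBnd : ∀ A : a, (∀ B : a, Ba A B = 0) → A = 0)
    (θa : a →ₗ[ℝ] a) (hθa2 : ∀ A : a, θa (θa A) = A)
    (hθaiso : ∀ A B : a, Ba (θa A) (θa B) = Ba A B)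
    (ρ : l →ₗ[ℝ] Module.End ℝ a)
    (hρ : ∀ L L' : l, ρ ⁅L, L'⁆ = ρ L ∘ₗ ρ L' - ρ L' ∘ₗ ρ L)
    (hρorth : ∀ (L : l) (A B : a), Ba (ρ L A) B + Ba A (ρ L B) = 0)
    (hcompat : ∀ L : l, θa ∘ₗ ρ (θl L) = ρ L ∘ₗ θa) :
    -- g is a Lie algebra:
    (∀ u v w : Module.Dual ℝ l × a × l,
        dBracket Ba ρ (u + v) w = dBracket Ba ρ u w + dBracket Ba ρ v w) ∧
    (∀ (c : ℝ) (u v : Module.Dual ℝ l × a × l),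
        dBracket Ba ρ (c • u) v = c • dBracket Ba ρ u v) ∧
    (∀ u : Module.Dual ℝ l × a × l, dBracket Ba ρ u u = 0) ∧
    (∀ u v w : Module.Dual ℝ l × a × l,
        dBracket Ba ρ (dBracket Ba ρ u v) w + dBracket Ba ρ (dBracket Ba ρ v w) u +
          dBracket Ba ρ (dBracket Ba ρ w u) v = 0) ∧
    -- the inner product is nondegenerate and invariant:
    (∀ u : Module.Dual ℝ l × a × l, (∀ v, dForm Ba u v = 0) → u = 0) ∧
    (∀ u v w : Module.Dual ℝ l × a × l,
        dForm Ba (dBracket Ba ρ u v) w + dForm Ba v (dBracket Ba ρ u w) = 0) ∧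
    -- θ is an isometric involutive automorphism:
    (∀ u : Module.Dual ℝ l × a × l, dInvolution θl θa (dInvolution θl θa u) = u) ∧
    (∀ u v : Module.Dual ℝ l × a × l,
        dForm Ba (dInvolution θl θa u) (dInvolution θl θa v) = dForm Ba u v) ∧
    (∀ u v : Module.Dual ℝ l × a × l,
        dInvolution θl θa (dBracket Ba ρ u v)
          = dBracket Ba ρ (dInvolution θl θa u) (dInvolution θl θa v)) := by

  classical
  -- pointwise versions of hypotheses
  have hρ' : ∀ (L L' : l) (A : a), ρ ⁅L, L'⁆ A = ρ L (ρ L' A) - ρ L' (ρ L A) := by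
    intro L L' A; rw [hρ]; rfl
  have horth : ∀ (L : l) (A B : a), Ba (ρ L A) B = - Ba A (ρ L B) := by
    intro L A B; linarith [hρorth L A B]
  have hcompat' : ∀ (L : l) (A : a), θa (ρ L A) = ρ (θl L) (θa A) := by
    intro L A
    have h := congrArg (fun f : a →ₗ[ℝ] a => f A) (hcompat (θl L))
    simpa [hθl2] using h
  refine ⟨?_, ?_, ?_, ?_, ?_, ?_, ?_, ?_, ?_⟩
  · intro u v w
    refine Prod.ext ?_ (Prod.ext ?_ ?_)
    · ext M
      simp [dBracket, coadAct, betaForm, map_add, add_lie]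
      ring
    · simp [dBracket, map_add]; abel
    · simp [dBracket, add_lie]
  · intro c u v
    refine Prod.ext ?_ (Prod.ext ?_ ?_)
    · ext M
      simp [dBracket, coadAct, betaForm, map_smul, smul_lie]
    · simp [dBracket, map_smul]; module
    · simp [dBracket, smul_lie]
  · intro u
    refine Prod.ext ?_ (Prod.ext ?_ ?_)
    · ext M
      have := horth M u.2.1 u.2.1
      have hs := hBsym u.2.1 (ρ M u.2.1)
      simp [dBracket, coadAct, betaForm]
      linarith
    · simp [dBracket]
    · simp [dBracket]
  · intro u v w
    obtain ⟨Z₁, A₁, L₁⟩ := u; obtain ⟨Z₂, A₂, L₂⟩ := v; obtain ⟨Z₃, A₃, L₃⟩ := w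
    refine Prod.ext ?_ (Prod.ext ?_ ?_)
    · ext M
      simp only [dBracket, coadAct, betaForm, LinearMap.add_apply, LinearMap.sub_apply,
        LinearMap.neg_apply, LinearMap.comp_apply, LinearMap.flip_apply,
        LieAlgebra.ad_apply, Prod.fst_add, Prod.snd_add, Prod.fst, Prod.snd,
        LinearMap.zero_apply, Prod.fst_zero, map_sub, map_add, map_neg, hρ',
        lie_lie]
      simp only [horth, hρ', map_sub, map_add, map_neg]
      ring_nf
      linear_combination (hρorth M A₁ ((ρ L₃) A₂) - hρorth L₃ A₂ ((ρ M) A₁)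
          - hBsym ((ρ M) A₁) ((ρ L₃) A₂))
        + (hρorth M A₂ ((ρ L₁) A₃) - hρorth L₁ A₃ ((ρ M) A₂)
          - hBsym ((ρ M) A₂) ((ρ L₁) A₃))
        + (hρorth M A₃ ((ρ L₂) A₁) - hρorth L₂ A₁ ((ρ M) A₃)
          - hBsym ((ρ M) A₃) ((ρ L₂) A₁))
    · simp only [dBracket, Prod.snd_add, Prod.fst, Prod.snd, map_sub, hρ',
        LinearMap.sub_apply, Prod.snd_zero, Prod.fst_add, Prod.fst_zero]
      abel
    · show ⁅⁅L₁,L₂⁆,L₃⁆ + ⁅⁅L₂,L₃⁆,L₁⁆ + ⁅⁅L₃,L₁⁆,L₂⁆ = (0 : l)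
      rw [(lie_skew ⁅L₁,L₂⁆ L₃).symm, (lie_skew ⁅L₂,L₃⁆ L₁).symm, (lie_skew ⁅L₃,L₁⁆ L₂).symm,
        ← neg_add, ← neg_add, neg_eq_zero]
      exact lie_jacobi L₃ L₁ L₂
  · intro u hu
    obtain ⟨Z, A, L⟩ := u
    have hZ : Z = 0 := by
      ext M
      have := hu (0, 0, M)
      simpa [dForm] using this
    have hA : A = 0 := by
      apply hBnd
      intro B
      have := hu (0, B, 0)
      simpa [dForm] using this
    have hL : L = 0 := by
      rw [← Module.forall_dual_apply_eq_zero_iff ℝ]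
      intro W
      have := hu (W, 0, 0)
      simpa [dForm] using this
    simp [hZ, hA, hL]
  · intro u v w
    obtain ⟨Z₁, A₁, L₁⟩ := u; obtain ⟨Z₂, A₂, L₂⟩ := v; obtain ⟨Z₃, A₃, L₃⟩ := w
    simp only [dForm, dBracket, coadAct, betaForm, LinearMap.add_apply, LinearMap.sub_apply,
      LinearMap.neg_apply, LinearMap.comp_apply, LinearMap.flip_apply, LieAlgebra.ad_apply,
      map_sub]
    have hz : Z₁ ⁅L₃, L₂⁆ = -Z₁ ⁅L₂, L₃⁆ := by rw [← lie_skew L₃ L₂, map_neg]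
    linear_combination hρorth L₁ A₂ A₃ + hBsym ((ρ L₃) A₁) A₂ + hz
  · intro u
    refine Prod.ext ?_ (Prod.ext ?_ ?_)
    · ext M; simp [dInvolution, hθl2]
    · simp [dInvolution, hθa2]
    · simp [dInvolution, hθl2]
  · intro u v
    simp [dForm, dInvolution, hθl2, hθaiso]
  · intro u v
    obtain ⟨Z₁, A₁, L₁⟩ := u; obtain ⟨Z₂, A₂, L₂⟩ := v
    refine Prod.ext ?_ (Prod.ext ?_ ?_)
    · ext M
      have key : Ba (ρ (θl M) A₁) A₂ = Ba (ρ M (θa A₁)) (θa A₂) := by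
        rw [← hθaiso (ρ (θl M) A₁) A₂, hcompat', hθl2]
      simp [dInvolution, dBracket, coadAct, betaForm, hθlbr, hθl2, key]
    · simp [dInvolution, dBracket, map_sub, hcompat']
    · simp [dInvolution, dBracket, hθlbr]


end
end

section
/- Consider the map f : ℝ³ → ℝ⁷, f(t,s,r) = (t, s, r, st, rt, 0, 0), where ℝ⁷ carries the symmetric bilinear form ⟨x,y⟩ = x₁y₁ + x₂y₂ + x₃y₃ + x₄y₆ + x₅y₇ + x₆y₄ + x₇y₅. Then for each point p = f(t,s,r) there is an affine isometry s_p of ℝ⁷ fixing p, acting as −Id on the tangent space of the image of f at p and as Id on its orthogonal complement, and satisfying s_p(f(t̄,s̄,r̄)) = f(2t−t̄, 2s−s̄, 2r−r̄); in particular s_p maps the image of f onto itself. -/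
/-- The symmetric bilinear form of signature `(2,5)` on `ℝ⁷` (Witt basis in the last
four coordinates): `⟨x,y⟩ = x₁y₁ + x₂y₂ + x₃y₃ + x₄y₆ + x₅y₇ + x₆y₄ + x₇y₅`. -/
def B7 (x y : Fin 7 → ℝ) : ℝ :=
  x 0 * y 0 + x 1 * y 1 + x 2 * y 2 + x 3 * y 5 + x 4 * y 6 + x 5 * y 3 + x 6 * y 4

/-- The embedding `f : ℝ³ → ℝ⁷`, `f(t,s,r) = (t, s, r, st, rt, 0, 0)`. -/
def f17 (t s r : ℝ) : Fin 7 → ℝ := ![t, s, r, s * t, r * t, 0, 0]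

section Aux

variable {α : Type*}

@[simp] lemma vec7_0 (a b c d e g h : α) : (![a,b,c,d,e,g,h]) 0 = a := rfl
@[simp] lemma vec7_1 (a b c d e g h : α) : (![a,b,c,d,e,g,h]) 1 = b := rfl
@[simp] lemma vec7_2 (a b c d e g h : α) : (![a,b,c,d,e,g,h]) 2 = c := rfl
@[simp] lemma vec7_3 (a b c d e g h : α) : (![a,b,c,d,e,g,h]) 3 = d := rfl
@[simp] lemma vec7_4 (a b c d e g h : α) : (![a,b,c,d,e,g,h]) 4 = e := rfl
@[simp] lemma vec7_5 (a b c d e g h : α) : (![a,b,c,d,e,g,h]) 5 = g := rfl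
@[simp] lemma vec7_6 (a b c d e g h : α) : (![a,b,c,d,e,g,h]) 6 = h := rfl

end Aux

def Lfun (t s r : ℝ) (x : Fin 7 → ℝ) : Fin 7 → ℝ :=
  ![-x 0 - 2*s*x 5 - 2*r*x 6,
    -x 1 - 2*t*x 5,
    -x 2 - 2*t*x 6,
    x 3 - 2*s*x 0 - 2*t*x 1 - 2*(s^2+t^2)*x 5 - 2*s*r*x 6,
    x 4 - 2*r*x 0 - 2*t*x 2 - 2*s*r*x 5 - 2*(r^2+t^2)*x 6,
    x 5, x 6]

@[simp] lemma Lfun0 (t s r : ℝ) (x : Fin 7 → ℝ) : Lfun t s r x 0 = -x 0 - 2*s*x 5 - 2*r*x 6 := rfl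
@[simp] lemma Lfun1 (t s r : ℝ) (x : Fin 7 → ℝ) : Lfun t s r x 1 = -x 1 - 2*t*x 5 := rfl
@[simp] lemma Lfun2 (t s r : ℝ) (x : Fin 7 → ℝ) : Lfun t s r x 2 = -x 2 - 2*t*x 6 := rfl
@[simp] lemma Lfun3 (t s r : ℝ) (x : Fin 7 → ℝ) :
    Lfun t s r x 3 = x 3 - 2*s*x 0 - 2*t*x 1 - 2*(s^2+t^2)*x 5 - 2*s*r*x 6 := rfl
@[simp] lemma Lfun4 (t s r : ℝ) (x : Fin 7 → ℝ) :
    Lfun t s r x 4 = x 4 - 2*r*x 0 - 2*t*x 2 - 2*s*r*x 5 - 2*(r^2+t^2)*x 6 := rfl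
@[simp] lemma Lfun5 (t s r : ℝ) (x : Fin 7 → ℝ) : Lfun t s r x 5 = x 5 := rfl
@[simp] lemma Lfun6 (t s r : ℝ) (x : Fin 7 → ℝ) : Lfun t s r x 6 = x 6 := rfl

@[simp] lemma f170 (t s r : ℝ) : f17 t s r 0 = t := rfl
@[simp] lemma f171 (t s r : ℝ) : f17 t s r 1 = s := rfl
@[simp] lemma f172 (t s r : ℝ) : f17 t s r 2 = r := rfl
@[simp] lemma f173 (t s r : ℝ) : f17 t s r 3 = s * t := rfl
@[simp] lemma f174 (t s r : ℝ) : f17 t s r 4 = r * t := rfl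
@[simp] lemma f175 (t s r : ℝ) : f17 t s r 5 = 0 := rfl
@[simp] lemma f176 (t s r : ℝ) : f17 t s r 6 = 0 := rfl

def Lmap (t s r : ℝ) : (Fin 7 → ℝ) →ₗ[ℝ] (Fin 7 → ℝ) where
  toFun := Lfun t s r
  map_add' x y := by
    funext i
    fin_cases i <;> simp <;> ring
  map_smul' a x := by
    funext i
    fin_cases i <;> simp <;> ring

@[simp] lemma Lmap_apply (t s r : ℝ) (x : Fin 7 → ℝ) : Lmap t s r x = Lfun t s r x := rfl

/-- For each point `p = f(t,s,r)` of the submanifold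
`f(t,s,r) = (t,s,r,st,rt,0,0)` of `(ℝ⁷, B7)` there is an affine isometry `s_p`
fixing `p`, acting as `-Id` on the tangent space at `p` and as `Id` on its orthogonal
complement, with `s_p(f(t̄,s̄,r̄)) = f(2t-t̄, 2s-s̄, 2r-r̄)`; in particular `s_p` maps
the image of `f` onto itself. -/
theorem stmt17 (t s r : ℝ) :
    ∃ (L : (Fin 7 → ℝ) →ₗ[ℝ] (Fin 7 → ℝ)) (c : Fin 7 → ℝ),
      -- s_p = L · + c fixes p :
      L (f17 t s r) + c = f17 t s r ∧
      -- the linear part is an isometry: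
      (∀ x y : Fin 7 → ℝ, B7 (L x) (L y) = B7 x y) ∧
      -- -Id on the tangent space at p :
      (∀ v ∈ Submodule.span ℝ
          ({![1, 0, 0, s, r, 0, 0], ![0, 1, 0, t, 0, 0, 0], ![0, 0, 1, 0, t, 0, 0]}
            : Set (Fin 7 → ℝ)), L v = -v) ∧
      -- Id on the orthogonal complement of the tangent space:
      (∀ w : Fin 7 → ℝ, (∀ v ∈ Submodule.span ℝ
          ({![1, 0, 0, s, r, 0, 0], ![0, 1, 0, t, 0, 0, 0], ![0, 0, 1, 0, t, 0, 0]}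
            : Set (Fin 7 → ℝ)), B7 w v = 0) → L w = w) ∧
      -- the reflection formula on the image of f :
      (∀ t' s' r' : ℝ,
        L (f17 t' s' r') + c = f17 (2 * t - t') (2 * s - s') (2 * r - r')) ∧
      -- s_p maps the image of f onto itself:
      (fun x => L x + c) '' {x | ∃ t' s' r' : ℝ, x = f17 t' s' r'}
        = {x | ∃ t' s' r' : ℝ, x = f17 t' s' r'} := by
  have hform : ∀ t' s' r' : ℝ,
      Lmap t s r (f17 t' s' r') + f17 (2*t) (2*s) (2*r)
        = f17 (2 * t - t') (2 * s - s') (2 * r - r') := by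
    intro t' s' r'
    funext i
    fin_cases i <;> simp [f17] <;> ring
  refine ⟨Lmap t s r, f17 (2*t) (2*s) (2*r), ?_, ?_, ?_, ?_, hform, ?_⟩
  · rw [hform t s r]
    funext i
    fin_cases i <;> simp [f17] <;> ring
  · intro x y
    simp only [Lmap_apply, B7, Lfun0, Lfun1, Lfun2, Lfun3, Lfun4, Lfun5, Lfun6]
    ring
  · intro v hv
    induction hv using Submodule.span_induction with
    | mem x hx =>
      simp only [Set.mem_insert_iff, Set.mem_singleton_iff] at hx
      rcases hx with rfl | rfl | rfl <;>
        · funext i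
          fin_cases i <;> simp <;> ring
    | zero => funext i; fin_cases i <;> simp
    | add x y _ _ hx hy => rw [map_add, hx, hy]; abel
    | smul a x _ hx => rw [map_smul, hx]; simp
  · intro w hw
    have h1 := hw _ (Submodule.subset_span (Set.mem_insert _ _))
    have h2 := hw _ (Submodule.subset_span
      (Set.mem_insert_of_mem _ (Set.mem_insert _ _)))
    have h3 := hw _ (Submodule.subset_span
      (Set.mem_insert_of_mem _ (Set.mem_insert_of_mem _ rfl)))
    simp only [B7, vec7_0, vec7_1, vec7_2, vec7_3, vec7_4, vec7_5, vec7_6] at h1 h2 h3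
    funext i
    fin_cases i
    · simp; linear_combination (-2 : ℝ) * h1
    · simp; linear_combination (-2 : ℝ) * h2
    · simp; linear_combination (-2 : ℝ) * h3
    · simp; linear_combination (-2*s) * h1 + (-2*t) * h2
    · simp; linear_combination (-2*r) * h1 + (-2*t) * h3
    · simp
    · simp
  · ext x
    simp only [Set.mem_image, Set.mem_setOf_eq]
    constructor
    · rintro ⟨y, ⟨t', s', r', rfl⟩, rfl⟩
      exact ⟨2*t - t', 2*s - s', 2*r - r', hform t' s' r'⟩
    · rintro ⟨t', s', r', rfl⟩
      refine ⟨f17 (2*t - t') (2*s - s') (2*r - r'), ⟨_, _, _, rfl⟩, ?_⟩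
      rw [hform]
      funext i
      fin_cases i <;> simp <;> ring
end
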